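/- arXiv:2006.05630 — 7 statements merged into one kernel-verified Lean document; each statement's English description precedes it below -/
import Mathlib

section
/- In the batch contextual bandit setup with the positive-density assumption, fix a policy π and δ > 0, and let α*(π) ∈ (0, ∞) be the unique maximizer over α ≥ 0 of φ(π, α) = −α log E_{P0}[exp(−Y(π(X))/α)] − αδ. Define the probability measure P(π) by the Radon–Nikodym derivative dP(π)/dP0 = exp(−Y(π(X))/α*(π)) / E_{P0}[exp(−Y(π(X))/α*(π))]. Then P(π) ∈ U_{P0}(δ) and P(π) is the unique minimizer of E_P[Y(π(X))] over P ∈ U_{P0}(δ). -/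
/-! For `α > 0` and `Q = μ.tilted (-Z / α)`, every `P ≪ μ` satisfies the Gibbs identity
`KL(P‖Q) = KL(P‖μ) + E_P[Z] / α + log E_μ[exp (-Z / α)]`, so on the ball `KL(P‖μ) ≤ δ` one has
`E_P[Z] ≥ φ(α) + α KL(P‖Q)`. At the maximiser `α*` the first-order condition `φ'(α*) = 0` says
`E_Q[Z] = φ(α*)`, which gives `KL(Q‖μ) = δ`, makes `Q` a minimiser, and forces `KL(P‖Q) = 0`,
i.e. `P = Q`, for every other minimiser `P`. -/

open scoped Classical ENNReal

open MeasureTheory Set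

/-- Kullback-Leibler divergence `D(P ‖ μ) = ∫ log (dP/dμ) dP`, written in the junk-value-free
form `∫⁻ (r log r - r + 1) dμ` (with `r = dP/dμ`). -/
noncomputable def klDiv {Ω : Type*} [MeasurableSpace Ω] (P μ : Measure Ω) : ℝ≥0∞ :=
  ∫⁻ ω, ENNReal.ofReal ((P.rnDeriv μ ω).toReal * Real.log (P.rnDeriv μ ω).toReal
      - (P.rnDeriv μ ω).toReal + 1) ∂μ

/-- The dual objective `φ(α) = −α log E[exp(−Z/α)] − αδ` of the KL-DRO evaluation problem,
with `φ(0)` defined to be the essential infimum of `Z`. -/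
noncomputable def dualKL {Ω : Type*} [MeasurableSpace Ω] (μ : Measure Ω) (Z : Ω → ℝ)
    (δ α : ℝ) : ℝ :=
  if α = 0 then essInf Z μ
  else -α * Real.log (∫ ω, Real.exp (-Z ω / α) ∂μ) - α * δ

open ProbabilityTheory

section Divergence

variable {Ω : Type*} [MeasurableSpace Ω] {P μ : Measure Ω} [IsFiniteMeasure P] [IsFiniteMeasure μ]

lemma klDiv_eq_informationTheory_klDiv (hPμ : P ≪ μ) :
    klDiv P μ = InformationTheory.klDiv P μ := by
  rw [InformationTheory.klDiv_eq_lintegral_klFun_of_ac hPμ, klDiv]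
  simp only [InformationTheory.klFun_apply, sub_add_eq_add_sub]

lemma integrable_llr_of_klDiv_le {δ : ℝ} (hPμ : P ≪ μ) (hKL : klDiv P μ ≤ ENNReal.ofReal δ) :
    Integrable (llr P μ) P := by
  rw [klDiv_eq_informationTheory_klDiv hPμ] at hKL
  exact (InformationTheory.klDiv_ne_top_iff.mp (ne_top_of_le_ne_top ENNReal.ofReal_ne_top hKL)).2

end Divergence

section Tilted

open Real

variable {Ω : Type*} [MeasurableSpace Ω] {μ P : Measure Ω} {f : Ω → ℝ}

lemma klDiv_tilted_right_ne_top [IsFiniteMeasure P] [SigmaFinite μ] (hPμ : P ≪ μ) (hfP : Integrable f P)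
    (hfμ : Integrable (fun x ↦ exp (f x)) μ) (hllr : Integrable (llr P μ) P) :
    InformationTheory.klDiv P (μ.tilted f) ≠ ⊤ :=
  InformationTheory.klDiv_ne_top (hPμ.trans (absolutelyContinuous_tilted hfμ))
    (integrable_llr_tilted_right hPμ hfP hllr hfμ)

lemma toReal_klDiv_tilted_right [IsProbabilityMeasure P] [IsProbabilityMeasure μ] (hPμ : P ≪ μ) (hfP : Integrable f P)
    (hfμ : Integrable (fun x ↦ exp (f x)) μ) (hllr : Integrable (llr P μ) P) :
    (InformationTheory.klDiv P (μ.tilted f)).toReal =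
      (InformationTheory.klDiv P μ).toReal - ∫ x, f x ∂P + log (∫ x, exp (f x) ∂μ) := by
  have := isProbabilityMeasure_tilted hfμ
  rw [InformationTheory.toReal_klDiv_of_measure_eq hPμ (by simp),
    InformationTheory.toReal_klDiv_of_measure_eq (hPμ.trans (absolutelyContinuous_tilted hfμ))
      (by simp), integral_llr_tilted_right hPμ hfP hfμ hllr]

lemma toReal_klDiv_tilted_left_self [IsProbabilityMeasure μ] (hfμ : Integrable (fun x ↦ exp (f x)) μ)
    (hf : Integrable f (μ.tilted f)) :
    (InformationTheory.klDiv (μ.tilted f) μ).toReal =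
      ∫ x, f x ∂(μ.tilted f) - log (∫ x, exp (f x) ∂μ) := by
  have := isProbabilityMeasure_tilted hfμ
  rw [InformationTheory.toReal_klDiv_of_measure_eq (tilted_absolutelyContinuous μ f) (by simp),
    integral_congr_ae (show llr (μ.tilted f) μ =ᵐ[μ.tilted f] _ from
      (tilted_absolutelyContinuous μ f).ae_le (log_rnDeriv_tilted_left_self hfμ)),
    integral_sub hf (integrable_const _)]
  simp

end Tilted

section Dual

open Real

variable {Ω : Type*} [MeasurableSpace Ω] {μ : Measure Ω} {Z : Ω → ℝ} {a b δ α : ℝ}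

lemma integrableExpSet_eq_univ_of_mem_Icc [IsFiniteMeasure μ] (hZ : AEMeasurable Z μ)
    (hZb : ∀ᵐ ω ∂μ, Z ω ∈ Icc a b) : integrableExpSet Z μ = univ :=
  eq_univ_of_forall fun _ ↦ integrable_exp_mul_of_mem_Icc hZ hZb

lemma integrable_exp_neg_div_of_mem_Icc [IsFiniteMeasure μ] (hZ : AEMeasurable Z μ)
    (hZb : ∀ᵐ ω ∂μ, Z ω ∈ Icc a b) : Integrable (fun ω ↦ exp (-Z ω / α)) μ := by
  simpa only [div_eq_inv_mul, mul_neg, neg_mul] using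
    integrable_exp_mul_of_mem_Icc (t := -α⁻¹) hZ hZb

lemma dualKL_eq_cgf (hα : α ≠ 0) : dualKL μ Z δ α = -α * cgf Z μ (-α⁻¹) - α * δ := by
  simp only [dualKL, if_neg hα, cgf, mgf, div_eq_inv_mul, mul_neg, neg_mul]

/-- `dualKL μ Z δ t = -t K(-1/t) - tδ` with `K = cgf Z μ`, and `K'(s)` is the mean of `Z` under
`μ.tilted (s * Z ·)`; the identity is `φ'(α) = 0` rewritten. -/
lemma integral_tilted_eq_dualKL_of_isLocalMax [IsProbabilityMeasure μ] (hZ : AEMeasurable Z μ)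
    (hZb : ∀ᵐ ω ∂μ, Z ω ∈ Icc a b) (hα : 0 < α) (hmax : IsLocalMax (dualKL μ Z δ) α) :
    ∫ ω, Z ω ∂(μ.tilted fun ω ↦ -Z ω / α) = dualKL μ Z δ α := by
  have hint : -α⁻¹ ∈ interior (integrableExpSet Z μ) := by
    simp [integrableExpSet_eq_univ_of_mem_Icc hZ hZb]
  have hK := (analyticAt_cgf hint).differentiableAt.hasDerivAt
  have hφ := ((hasDerivAt_id α).neg.mul (hK.comp α (hasDerivAt_inv hα.ne').neg)).sub
    ((hasDerivAt_id α).mul_const δ)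
  have hmax' : IsLocalMax (fun t ↦ -t * cgf Z μ (-t⁻¹) - t * δ) α :=
    hmax.congr (by filter_upwards [eventually_ne_nhds hα.ne'] with t ht using dualKL_eq_cgf ht)
  have hfoc := hmax'.hasDerivAt_eq_zero hφ
  have htilt : (fun ω ↦ -Z ω / α) = (-α⁻¹ * Z ·) := by
    ext ω
    ring
  rw [htilt, integral_tilted_mul_self hint, dualKL_eq_cgf hα.ne']
  simp only [Function.comp_apply, Pi.neg_apply, id] at hfoc
  generalize cgf Z μ (-α⁻¹) = K at hfoc ⊢
  generalize deriv (cgf Z μ) (-α⁻¹) = K' at hfoc ⊢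
  field_simp at hfoc
  linarith

end Dual

section KLBall

open Real

variable {Ω : Type*} [MeasurableSpace Ω] {μ P : Measure Ω} [IsProbabilityMeasure μ]
  {Z : Ω → ℝ} {a b δ α : ℝ}

lemma klDiv_tilted_eq_of_integral_eq_dualKL (hZ : AEMeasurable Z μ)
    (hZb : ∀ᵐ ω ∂μ, Z ω ∈ Icc a b) (hδ : 0 < δ) (hα : 0 < α)
    (hfoc : ∫ ω, Z ω ∂(μ.tilted fun ω ↦ -Z ω / α) = dualKL μ Z δ α) :
    klDiv (μ.tilted fun ω ↦ -Z ω / α) μ = ENNReal.ofReal δ := by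
  have hexp : Integrable (fun ω ↦ exp (-Z ω / α)) μ := integrable_exp_neg_div_of_mem_Icc hZ hZb
  have := isProbabilityMeasure_tilted hexp
  have hac := tilted_absolutelyContinuous μ fun ω ↦ -Z ω / α
  have hreal := toReal_klDiv_tilted_left_self hexp
    ((Integrable.of_mem_Icc a b (hZ.mono_ac hac) (hac.ae_le hZb)).neg.div_const α)
  rw [integral_div, integral_neg, hfoc, dualKL, if_neg hα.ne'] at hreal
  have hδ' : (InformationTheory.klDiv (μ.tilted fun ω ↦ -Z ω / α) μ).toReal = δ := by
    rw [hreal]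
    field_simp
    ring
  rw [klDiv_eq_informationTheory_klDiv hac, ← hδ', ENNReal.ofReal_toReal]
  intro htop
  rw [htop, ENNReal.toReal_top] at hδ'
  exact hδ.ne hδ'

variable [IsProbabilityMeasure P]

lemma dualKL_add_mul_klDiv_tilted_le_integral (hZ : AEMeasurable Z μ)
    (hZb : ∀ᵐ ω ∂μ, Z ω ∈ Icc a b) (hδ : 0 ≤ δ) (hα : 0 < α) (hPμ : P ≪ μ)
    (hKL : klDiv P μ ≤ ENNReal.ofReal δ) :
    dualKL μ Z δ α + α * (InformationTheory.klDiv P (μ.tilted fun ω ↦ -Z ω / α)).toReal ≤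
      ∫ ω, Z ω ∂P := by
  have hZP : Integrable Z P := .of_mem_Icc a b (hZ.mono_ac hPμ) (hPμ.ae_le hZb)
  have hKLδ : (InformationTheory.klDiv P μ).toReal ≤ δ := by
    rw [← klDiv_eq_informationTheory_klDiv hPμ]
    exact ENNReal.toReal_le_of_le_ofReal hδ hKL
  rw [toReal_klDiv_tilted_right (f := fun ω ↦ -Z ω / α) hPμ (hZP.neg.div_const α)
      (integrable_exp_neg_div_of_mem_Icc hZ hZb) (integrable_llr_of_klDiv_le hPμ hKL),
    integral_div, integral_neg, dualKL, if_neg hα.ne']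
  have hcancel : α * ((-∫ ω, Z ω ∂P) / α) = -∫ ω, Z ω ∂P := by field_simp
  nlinarith

lemma eq_tilted_of_integral_le_dualKL (hZ : AEMeasurable Z μ) (hZb : ∀ᵐ ω ∂μ, Z ω ∈ Icc a b)
    (hδ : 0 ≤ δ) (hα : 0 < α) (hPμ : P ≪ μ) (hKL : klDiv P μ ≤ ENNReal.ofReal δ)
    (hle : ∫ ω, Z ω ∂P ≤ dualKL μ Z δ α) :
    P = μ.tilted fun ω ↦ -Z ω / α := by
  have hexp : Integrable (fun ω ↦ exp (-Z ω / α)) μ := integrable_exp_neg_div_of_mem_Icc hZ hZb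
  have := isProbabilityMeasure_tilted hexp
  have hne := klDiv_tilted_right_ne_top hPμ
    ((Integrable.of_mem_Icc a b (hZ.mono_ac hPμ) (hPμ.ae_le hZb)).neg.div_const α) hexp
    (integrable_llr_of_klDiv_le hPμ hKL)
  have hzero : (InformationTheory.klDiv P (μ.tilted fun ω ↦ -Z ω / α)).toReal = 0 := by
    have := dualKL_add_mul_klDiv_tilted_le_integral hZ hZb hδ hα hPμ hKL
    nlinarith [ENNReal.toReal_nonneg (a := InformationTheory.klDiv P (μ.tilted fun ω ↦ -Z ω / α))]
  exact InformationTheory.klDiv_eq_zero_iff.mp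
    (((ENNReal.toReal_eq_zero_iff _).mp hzero).resolve_right hne)

end KLBall

theorem stmt2_general {Ω 𝒳 𝒜 : Type*} [MeasurableSpace Ω] [MeasurableSpace 𝒳] [MeasurableSpace 𝒜]
    [Fintype 𝒜] [MeasurableSingletonClass 𝒜]
    (μ : Measure Ω) [IsProbabilityMeasure μ]
    (X : Ω → 𝒳) (Y : 𝒜 → Ω → ℝ) (M : ℝ)
    (hX : Measurable X) (hY : ∀ a, Measurable (Y a))
    (hbound : ∀ a, ∀ᵐ ω ∂μ, Y a ω ∈ Set.Icc 0 M)
    (π : 𝒳 → 𝒜) (hπ : Measurable π) (δ : ℝ) (hδ : 0 < δ)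
    (αstar : ℝ) (hαstar : 0 < αstar)
    -- `αstar` is the unique maximizer of the dual objective over `α ≥ 0`:
    (hmax : ∀ β : ℝ, 0 ≤ β →
      dualKL μ (fun ω => Y (π (X ω)) ω) δ β ≤ dualKL μ (fun ω => Y (π (X ω)) ω) δ αstar) :
    klDiv (μ.tilted fun ω => -Y (π (X ω)) ω / αstar) μ ≤ ENNReal.ofReal δ ∧
    (∀ P : Measure Ω, IsProbabilityMeasure P → P ≪ μ → klDiv P μ ≤ ENNReal.ofReal δ →
      ∫ ω, Y (π (X ω)) ω ∂(μ.tilted fun ω => -Y (π (X ω)) ω / αstar) ≤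
        ∫ ω, Y (π (X ω)) ω ∂P) ∧
    (∀ P : Measure Ω, IsProbabilityMeasure P → P ≪ μ → klDiv P μ ≤ ENNReal.ofReal δ →
      (∫ ω, Y (π (X ω)) ω ∂P =
        ∫ ω, Y (π (X ω)) ω ∂(μ.tilted fun ω => -Y (π (X ω)) ω / αstar)) →
      P = μ.tilted fun ω => -Y (π (X ω)) ω / αstar) := by
  have hZ : Measurable fun ω ↦ Y (π (X ω)) ω :=
    (measurable_from_prod_countable_right (f := fun p : 𝒜 × Ω ↦ Y p.1 p.2) hY).comp
      ((hπ.comp hX).prodMk measurable_id)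
  have hZb : ∀ᵐ ω ∂μ, Y (π (X ω)) ω ∈ Icc 0 M := by
    filter_upwards [ae_all_iff.2 hbound] with ω hω using hω _
  have hfoc := integral_tilted_eq_dualKL_of_isLocalMax hZ.aemeasurable hZb hαstar
    (IsMaxOn.isLocalMax hmax (Ici_mem_nhds hαstar))
  refine ⟨(klDiv_tilted_eq_of_integral_eq_dualKL hZ.aemeasurable hZb hδ hαstar hfoc).le,
    fun P _ hPμ hKL ↦ ?_, fun P _ hPμ hKL heq ↦ ?_⟩
  · rw [hfoc]
    exact (le_add_of_nonneg_right (mul_nonneg hαstar.le ENNReal.toReal_nonneg)).trans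
      (dualKL_add_mul_klDiv_tilted_le_integral hZ.aemeasurable hZb hδ.le hαstar hPμ hKL)
  · exact eq_tilted_of_integral_le_dualKL hZ.aemeasurable hZb hδ.le hαstar hPμ hKL
      (heq.trans hfoc).le

/-- **The worst-case distribution of KL-DRO policy evaluation.** In the batch contextual
bandit setup with the positive-density assumption, with `α*(π) ∈ (0, ∞)` the unique
maximizer of the dual objective `φ(π, α) = −α log E[exp(−Y(π(X))/α)] − αδ` over `α ≥ 0`,
the exponentially tilted measure `P(π)` with
`dP(π)/dP0 = exp(−Y(π(X))/α*) / E[exp(−Y(π(X))/α*)]` belongs to the KL-ball `U_{P0}(δ)` and is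
the unique minimizer of `E_P[Y(π(X))]` over `P ∈ U_{P0}(δ)`. -/
theorem stmt2 {Ω 𝒳 𝒜 : Type*} [MeasurableSpace Ω] [MeasurableSpace 𝒳] [MeasurableSpace 𝒜]
    [Fintype 𝒜] [MeasurableSingletonClass 𝒜]
    (μ : Measure Ω) [IsProbabilityMeasure μ]
    (X : Ω → 𝒳) (Y : 𝒜 → Ω → ℝ) (M b : ℝ) (hb : 0 < b)
    (hX : Measurable X) (hY : ∀ a, Measurable (Y a))
    (hbound : ∀ a, ∀ᵐ ω ∂μ, Y a ω ∈ Set.Icc 0 M)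
    -- positive-density assumption: `Y(a) | X` has conditional density `f a x ≥ b` on `[0, M]`:
    (f : 𝒜 → 𝒳 → ℝ → ℝ) (hfmeas : ∀ a, Measurable (Function.uncurry (f a)))
    (hfpos : ∀ a x, ∀ y ∈ Set.Icc (0 : ℝ) M, b ≤ f a x y)
    (hfzero : ∀ a x, ∀ y : ℝ, y ∉ Set.Icc (0 : ℝ) M → f a x y = 0)
    (hdensity : ∀ (a : 𝒜) (s : Set 𝒳), MeasurableSet s → ∀ B : Set ℝ, MeasurableSet B →
      (μ {ω | X ω ∈ s ∧ Y a ω ∈ B}).toReal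
        = ∫ ω in X ⁻¹' s, (∫ y in B, f a (X ω) y) ∂μ)
    (π : 𝒳 → 𝒜) (hπ : Measurable π) (δ : ℝ) (hδ : 0 < δ)
    (αstar : ℝ) (hαstar : 0 < αstar)
    -- `αstar` is the unique maximizer of the dual objective over `α ≥ 0`:
    (hmax : ∀ β : ℝ, 0 ≤ β →
      dualKL μ (fun ω => Y (π (X ω)) ω) δ β ≤ dualKL μ (fun ω => Y (π (X ω)) ω) δ αstar)
    (huniq : ∀ β : ℝ, 0 ≤ β →
      dualKL μ (fun ω => Y (π (X ω)) ω) δ β = dualKL μ (fun ω => Y (π (X ω)) ω) δ αstar →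
      β = αstar) :
    klDiv (μ.tilted fun ω => -Y (π (X ω)) ω / αstar) μ ≤ ENNReal.ofReal δ ∧
    (∀ P : Measure Ω, IsProbabilityMeasure P → P ≪ μ → klDiv P μ ≤ ENNReal.ofReal δ →
      ∫ ω, Y (π (X ω)) ω ∂(μ.tilted fun ω => -Y (π (X ω)) ω / αstar) ≤
        ∫ ω, Y (π (X ω)) ω ∂P) ∧
    (∀ P : Measure Ω, IsProbabilityMeasure P → P ≪ μ → klDiv P μ ≤ ENNReal.ofReal δ →
      (∫ ω, Y (π (X ω)) ω ∂P =
        ∫ ω, Y (π (X ω)) ω ∂(μ.tilted fun ω => -Y (π (X ω)) ω / αstar)) →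
      P = μ.tilted fun ω => -Y (π (X ω)) ω / αstar) :=
  stmt2_general μ X Y M hX hY hbound π hπ δ hδ αstar hαstar hmax
end

section
/- In the batch contextual bandit setup with the positive-density assumption, suppose that under P0 the rewards Y(a^1), …, Y(a^d) are mutually conditionally independent given X. Fix a policy π and δ > 0, let α*(π) ∈ (0, ∞) be the unique maximizer of φ(π, α) = −α log E_{P0}[exp(−Y(π(X))/α)] − αδ over α ≥ 0, and let P(π) be the tilted measure with dP(π)/dP0 = exp(−Y(π(X))/α*(π)) / E_{P0}[exp(−Y(π(X))/α*(π))]. Then under P(π) the rewards Y(a^1), …, Y(a^d) are still mutually conditionally independent given X. -/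
open scoped Classical ENNReal

open MeasureTheory Set ProbabilityTheory

/-! On each `σ(X)`-measurable piece `{π(X) = a}` the tilting density `g = exp(−Y(π(X))/α*)` is a
function of the single reward `Y(a)`. By Bayes' rule, `P(π)(A | X) = E[1_A g | X] / E[g | X]`.
Since `Y(a)` is conditionally independent of the other rewards, for `A = ⋂_{i ∈ S} {Y(i) ∈ Bᵢ}`
the numerator factors as `∏_{i ≠ a} P0(Y(i) ∈ Bᵢ | X) · E[1_{Y(a) ∈ Bₐ} g | X]`, and the same
factorization for each single event shows that the ratio is the product of the
`P(π)(Y(i) ∈ Bᵢ | X)`.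

Conditional independence is stated for events only; it reaches the function `g` of `Y(a)`
because it identifies the measures `C ↦ P0(t ∩ A ∩ {Y(a) ∈ C})` and
`C ↦ ∫_{t ∩ {Y(a) ∈ C}} P0(A | X) dP0` for `X`-measurable `t`. -/

section

variable {Ω β : Type*} {m' mΩ : MeasurableSpace Ω} [MeasurableSpace β] {μ : Measure Ω}

theorem integral_mul_comp_eq_of_forall_setIntegral_preimage_eq {f g : Ω → ℝ} {W : Ω → β}
    (hf : Integrable f μ) (hg : Integrable g μ) (hf₀ : 0 ≤ᵐ[μ] f) (hg₀ : 0 ≤ᵐ[μ] g)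
    (hW : Measurable W)
    (hfg : ∀ C, MeasurableSet C → ∫ ω in W ⁻¹' C, f ω ∂μ = ∫ ω in W ⁻¹' C, g ω ∂μ)
    {φ : β → ℝ} (hφ : Measurable φ) :
    ∫ ω, f ω * φ (W ω) ∂μ = ∫ ω, g ω * φ (W ω) ∂μ := by
  have hmap : ∀ {h : Ω → ℝ}, Integrable h μ → 0 ≤ᵐ[μ] h →
      ∫ ω, h ω * φ (W ω) ∂μ
        = ∫ y, φ y ∂(μ.withDensity fun ω => ENNReal.ofReal (h ω)).map W := by
    intro h hh hh₀
    rw [integral_map hW.aemeasurable hφ.aestronglyMeasurable,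
      integral_withDensity_eq_integral_toReal_smul₀ hh.1.aemeasurable.ennreal_ofReal
        (ae_of_all _ fun _ => ENNReal.ofReal_lt_top)]
    refine integral_congr_ae ?_
    filter_upwards [hh₀] with ω hω
    simp [ENNReal.toReal_ofReal hω]
  rw [hmap hf hf₀, hmap hg hg₀]
  congr 1
  ext C hC
  rw [Measure.map_apply hW hC, Measure.map_apply hW hC, withDensity_apply _ (hW hC),
    withDensity_apply _ (hW hC),
    ← ofReal_integral_eq_lintegral_ofReal hf.integrableOn (ae_restrict_of_ae hf₀),
    ← ofReal_integral_eq_lintegral_ofReal hg.integrableOn (ae_restrict_of_ae hg₀), hfg C hC]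

theorem setIntegral_mul_condExp_of_bound (hm' : m' ≤ mΩ) [IsFiniteMeasure μ] {P F : Ω → ℝ}
    (hP : StronglyMeasurable[m'] P) {c : ℝ} (hPc : ∀ᵐ ω ∂μ, ‖P ω‖ ≤ c) (hF : Integrable F μ)
    {s : Set Ω} (hs : MeasurableSet[m'] s) :
    ∫ ω in s, P ω * μ[F|m'] ω ∂μ = ∫ ω in s, P ω * F ω ∂μ := by
  rw [← setIntegral_condExp hm' (hF.bdd_mul (hP.mono hm').aestronglyMeasurable hPc) hs]
  refine setIntegral_congr_ae (hm' s hs) ?_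
  filter_upwards [condExp_stronglyMeasurable_mul_of_bound hm' hP hF c hPc] with ω hω _
  exact hω.symm

theorem condExp_ae_eq_of_eqOn {E : Type*} [NormedAddCommGroup E] [NormedSpace ℝ E]
    [CompleteSpace E] {f g : Ω → E} (hf : Integrable f μ) (hg : Integrable g μ) {s : Set Ω}
    (hs : MeasurableSet[m'] s) (hfg : EqOn f g s) :
    ∀ᵐ ω ∂μ, ω ∈ s → μ[f|m'] ω = μ[g|m'] ω := by
  have hf' := condExp_indicator hf hs
  rw [indicator_congr hfg] at hf'
  filter_upwards [hf', condExp_indicator hg hs] with ω h₁ h₂ hω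
  rw [indicator_of_mem hω] at h₁ h₂
  rw [← h₁, ← h₂]

theorem integrable_exp_of_ae_abs_le [IsFiniteMeasure μ] {f : Ω → ℝ} (hf : AEMeasurable f μ)
    {C : ℝ} (hC : ∀ᵐ ω ∂μ, |f ω| ≤ C) : Integrable (fun ω => Real.exp (f ω)) μ :=
  Integrable.of_bound (Real.measurable_exp.comp_aemeasurable hf).aestronglyMeasurable
    (Real.exp C) (hC.mono fun ω h => by
      rw [Real.norm_eq_abs, Real.abs_exp]
      exact Real.exp_le_exp.2 (le_of_abs_le h))

theorem condExp_tilted_indicator_ae_eq (hm' : m' ≤ mΩ) [IsFiniteMeasure μ] {ρ : Ω → ℝ}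
    (hρ : Integrable (fun ω => Real.exp (ρ ω)) μ) {A : Set Ω} (hA : MeasurableSet A) :
    (μ.tilted ρ)⟦A | m'⟧ =ᵐ[μ.tilted ρ] fun ω =>
      μ[A.indicator fun ω => Real.exp (ρ ω)|m'] ω / μ[fun ω => Real.exp (ρ ω)|m'] ω := by
  set N := μ[A.indicator fun ω => Real.exp (ρ ω)|m']
  set D := μ[fun ω => Real.exp (ρ ω)|m']
  set h : Ω → ℝ := fun ω => N ω / D ω
  have hNA : ∀ᵐ ω ∂μ, 0 ≤ N ω ∧ N ω ≤ D ω := by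
    filter_upwards [condExp_nonneg (m := m') (ae_of_all μ (indicator_nonneg
      fun ω _ => (Real.exp_pos (ρ ω)).le)), condExp_mono (m := m') (hρ.indicator hA) hρ
      (ae_of_all μ (indicator_le_self' fun ω _ => (Real.exp_pos (ρ ω)).le))] with ω h₀ h₁
    exact ⟨h₀, h₁⟩
  have hh : StronglyMeasurable[m'] h :=
    (stronglyMeasurable_condExp.measurable.div
      stronglyMeasurable_condExp.measurable).stronglyMeasurable
  have hh₁ : ∀ᵐ ω ∂μ, ‖h ω‖ ≤ 1 := by
    filter_upwards [hNA] with ω ⟨h₀, h₁⟩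
    rw [Real.norm_eq_abs, abs_le]
    exact ⟨by linarith [div_nonneg h₀ (h₀.trans h₁)], div_le_one_of_le₀ h₁ (h₀.trans h₁)⟩
  have hhD : ∀ᵐ ω ∂μ, h ω * D ω = N ω := by
    filter_upwards [hNA] with ω ⟨h₀, h₁⟩
    rcases eq_or_ne (D ω) 0 with hD | hD
    · simp [h, hD, le_antisymm (hD ▸ h₁) h₀]
    · exact div_mul_cancel₀ _ hD
  refine (ae_eq_condExp_of_forall_setIntegral_eq hm' ((integrable_const 1).indicator hA)
    (fun s _ _ => (Integrable.of_bound (hh.mono hm').aestronglyMeasurable 1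
      ((tilted_absolutelyContinuous μ ρ).ae_le hh₁)).integrableOn)
    (fun s hs _ => ?_) hh.aestronglyMeasurable).symm
  have htilt : ∀ F : Ω → ℝ, ∫ ω in s, F ω ∂μ.tilted ρ
      = (∫ ω in s, F ω * Real.exp (ρ ω) ∂μ) / ∫ ω, Real.exp (ρ ω) ∂μ := by
    intro F
    rw [setIntegral_tilted' ρ F (hm' s hs), ← integral_div]
    congr 1 with ω
    rw [smul_eq_mul]
    ring
  rw [htilt, htilt]
  congr 1
  calc ∫ ω in s, h ω * Real.exp (ρ ω) ∂μ
      = ∫ ω in s, h ω * D ω ∂μ := (setIntegral_mul_condExp_of_bound hm' hh hh₁ hρ hs).symm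
    _ = ∫ ω in s, N ω ∂μ := setIntegral_congr_ae (hm' s hs) (hhD.mono fun ω h _ => h)
    _ = ∫ ω in s, A.indicator (fun ω => Real.exp (ρ ω)) ω ∂μ :=
        setIntegral_condExp hm' (hρ.indicator hA) hs
    _ = ∫ ω in s, A.indicator (fun _ => (1 : ℝ)) ω * Real.exp (ρ ω) ∂μ := by
        congr 1 with ω
        by_cases hω : ω ∈ A <;> simp [hω]

namespace ProbabilityTheory

variable [StandardBorelSpace Ω] [IsFiniteMeasure μ] {hm' : m' ≤ mΩ}

theorem CondIndepFun.condExp_indicator_preimage_comp {β' : Type*} [MeasurableSpace β']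
    {V : Ω → β'} {W : Ω → β} (hVW : CondIndepFun m' hm' V W μ) (hV : Measurable V)
    (hW : Measurable W) {s : Set β'} (hs : MeasurableSet s) {φ : β → ℝ} (hφ : Measurable φ)
    (hφW : Integrable (φ ∘ W) μ) :
    μ[(V ⁻¹' s).indicator (φ ∘ W)|m'] =ᵐ[μ] μ⟦V ⁻¹' s | m'⟧ * μ[φ ∘ W|m'] := by
  set A := V ⁻¹' s
  set P := μ⟦A | m'⟧
  have hA : MeasurableSet A := hV hs
  have h1A : Integrable (A.indicator fun _ => (1 : ℝ)) μ := (integrable_const 1).indicator hA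
  have hP : StronglyMeasurable[m'] P := stronglyMeasurable_condExp
  have hP₀ : 0 ≤ᵐ[μ] P := condExp_nonneg (ae_of_all _ (indicator_nonneg fun _ _ => zero_le_one))
  have hP₁ : ∀ᵐ ω ∂μ, ‖P ω‖ ≤ 1 := by
    have := ae_bdd_abs_condExp_of_ae_bdd_abs (m := m') (μ := μ) (R := (1 : ℝ))
      (f := A.indicator fun _ => (1 : ℝ))
      (ae_of_all _ fun ω => by by_cases h : ω ∈ A <;> simp [h])
    simpa using this
  refine (ae_eq_condExp_of_forall_setIntegral_eq hm' (hφW.indicator hA)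
    (fun t _ _ => (integrable_condExp.bdd_mul (hP.mono hm').aestronglyMeasurable hP₁).integrableOn)
    (fun t ht _ => ?_) (hP.mul stronglyMeasurable_condExp).aestronglyMeasurable).symm
  have hpre : ∀ C, MeasurableSet C → ∫ ω in W ⁻¹' C, A.indicator (fun _ => (1 : ℝ)) ω ∂μ.restrict t
      = ∫ ω in W ⁻¹' C, P ω ∂μ.restrict t := by
    intro C hC
    calc ∫ ω in W ⁻¹' C, A.indicator (fun _ => (1 : ℝ)) ω ∂μ.restrict t
        = ∫ ω in t, (A ∩ W ⁻¹' C).indicator (fun _ => (1 : ℝ)) ω ∂μ := by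
          rw [← integral_indicator (hW hC), indicator_indicator, inter_comm]
      _ = ∫ ω in t, (μ⟦A ∩ W ⁻¹' C | m'⟧) ω ∂μ :=
          (setIntegral_condExp hm' ((integrable_const 1).indicator (hA.inter (hW hC))) ht).symm
      _ = ∫ ω in t, P ω * (μ⟦W ⁻¹' C | m'⟧) ω ∂μ := by
          refine setIntegral_congr_ae (hm' t ht) ?_
          filter_upwards [(condIndepFun_iff_condExp_inter_preimage_eq_mul hV hW).1 hVW s C hs hC]
            with ω hω _ using hω
      _ = ∫ ω in t, P ω * (W ⁻¹' C).indicator (fun _ => (1 : ℝ)) ω ∂μ :=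
          setIntegral_mul_condExp_of_bound hm' hP hP₁ ((integrable_const 1).indicator (hW hC)) ht
      _ = ∫ ω in W ⁻¹' C, P ω ∂μ.restrict t := by
          rw [← integral_indicator (hW hC)]
          congr 1 with ω
          by_cases h : ω ∈ W ⁻¹' C <;> simp [h]
  calc ∫ ω in t, (P * μ[φ ∘ W|m']) ω ∂μ
      = ∫ ω in t, P ω * φ (W ω) ∂μ := setIntegral_mul_condExp_of_bound hm' hP hP₁ hφW ht
    _ = ∫ ω in t, A.indicator (fun _ => (1 : ℝ)) ω * φ (W ω) ∂μ :=
        (integral_mul_comp_eq_of_forall_setIntegral_preimage_eq h1A.integrableOn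
          integrable_condExp.integrableOn
          (ae_restrict_of_ae (ae_of_all _ (indicator_nonneg fun _ _ => zero_le_one)))
          (ae_restrict_of_ae hP₀) hW hpre hφ).symm
    _ = ∫ ω in t, A.indicator (φ ∘ W) ω ∂μ := by
        congr 1 with ω
        by_cases h : ω ∈ A <;> simp [h]

variable {ι : Type*} {Y : ι → Ω → β}

theorem iCondIndepFun.condExp_indicator_biInter_comp (hind : iCondIndepFun m' hm' Y μ)
    (hY : ∀ i, Measurable (Y i)) {T : Finset ι} {a : ι} (ha : a ∉ T) {sets : ι → Set β}
    (hsets : ∀ i ∈ T, MeasurableSet (sets i)) {φ : β → ℝ} (hφ : Measurable φ)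
    (hφY : Integrable (φ ∘ Y a) μ) :
    μ[(⋂ i ∈ T, Y i ⁻¹' sets i).indicator (φ ∘ Y a)|m']
      =ᵐ[μ] (∏ i ∈ T, μ⟦Y i ⁻¹' sets i | m'⟧) * μ[φ ∘ Y a|m'] := by
  have hVW : CondIndepFun m' hm' (fun ω (i : T) => Y i ω) (Y a) μ :=
    (hind.condIndepFun_finset T {a} (Finset.disjoint_singleton_right.2 ha) hY).comp
      measurable_id (measurable_pi_apply (⟨a, Finset.mem_singleton_self a⟩ : ({a} : Finset ι)))
  have hpre : ⋂ i ∈ T, Y i ⁻¹' sets i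
      = (fun ω (i : T) => Y i ω) ⁻¹' univ.pi fun i => sets i := by
    ext ω
    simp
  have hprod := (iCondIndepFun_iff_condExp_inter_preimage_eq_mul _ Y hY).1 hind T hsets
  rw [hpre] at hprod ⊢
  filter_upwards [hVW.condExp_indicator_preimage_comp (measurable_pi_lambda _ fun i => hY i)
    (hY a) (MeasurableSet.univ_pi fun i => hsets i i.2) hφ hφY, hprod] with ω h₁ h₂
  rw [h₁, Pi.mul_apply, Pi.mul_apply, h₂]

theorem iCondIndepFun.condExp_indicator_biInter_comp_div (hind : iCondIndepFun m' hm' Y μ)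
    (hY : ∀ i, Measurable (Y i)) (a : ι) {φ : β → ℝ} (hφ : Measurable φ)
    (hφY : Integrable (φ ∘ Y a) μ) (hD : ∀ᵐ ω ∂μ, μ[φ ∘ Y a|m'] ω ≠ 0) (S : Finset ι)
    {sets : ι → Set β} (hsets : ∀ i ∈ S, MeasurableSet (sets i)) :
    ∀ᵐ ω ∂μ, μ[(⋂ i ∈ S, Y i ⁻¹' sets i).indicator (φ ∘ Y a)|m'] ω / μ[φ ∘ Y a|m'] ω
      = ∏ i ∈ S, μ[(Y i ⁻¹' sets i).indicator (φ ∘ Y a)|m'] ω / μ[φ ∘ Y a|m'] ω := by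
  set D := μ[φ ∘ Y a|m']
  set N : Set Ω → Ω → ℝ := fun A => μ[A.indicator (φ ∘ Y a)|m']
  have hsingle : ∀ᵐ ω ∂μ, ∀ i ∈ S, i ≠ a →
      N (Y i ⁻¹' sets i) ω / D ω = (μ⟦Y i ⁻¹' sets i | m'⟧) ω := by
    refine (Filter.eventually_all_finset S).2 fun i hi => ?_
    by_cases hia : i = a
    · exact ae_of_all _ fun _ h => absurd hia h
    filter_upwards [hind.condExp_indicator_biInter_comp hY (T := {i}) (a := a) (sets := sets)
      (by simpa using Ne.symm hia) (by simpa using hsets i hi) hφ hφY, hD] with ω hω hDω _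
    simp only [N, Finset.set_biInter_singleton, Finset.prod_singleton] at hω ⊢
    rw [hω, Pi.mul_apply, mul_div_cancel_right₀ _ hDω]
  by_cases ha : a ∈ S
  · have hcomp : (Y a ⁻¹' sets a).indicator (φ ∘ Y a) = (sets a).indicator φ ∘ Y a :=
      funext fun ω => indicator_comp_right (Y a)
    have hsplit : (⋂ i ∈ S, Y i ⁻¹' sets i).indicator (φ ∘ Y a)
        = (⋂ i ∈ S.erase a, Y i ⁻¹' sets i).indicator ((sets a).indicator φ ∘ Y a) := by
      conv_lhs => rw [← Finset.insert_erase ha, Finset.set_biInter_insert]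
      rw [← hcomp, indicator_indicator, inter_comm]
    filter_upwards [hind.condExp_indicator_biInter_comp hY (Finset.notMem_erase a S)
      (fun i hi => hsets i (Finset.mem_of_mem_erase hi)) (hφ.indicator (hsets a ha))
      (hcomp ▸ hφY.indicator (hY a (hsets a ha))), hsingle] with ω hω hPi
    rw [hsplit, hω, ← Finset.mul_prod_erase S _ ha, Pi.mul_apply, Finset.prod_apply,
      Finset.prod_congr rfl fun i hi =>
        hPi i (Finset.mem_of_mem_erase hi) (Finset.ne_of_mem_erase hi)]
    simp only [hcomp]
    ring
  · filter_upwards [hind.condExp_indicator_biInter_comp hY ha hsets hφ hφY, hsingle, hD]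
      with ω hω hPi hDω
    rw [hω, Pi.mul_apply, mul_div_cancel_right₀ _ hDω, Finset.prod_apply,
      Finset.prod_congr rfl fun i hi => hPi i hi (ne_of_mem_of_not_mem hi ha)]

theorem iCondIndepFun.tilted_of_selected_coordinate [MeasurableSpace ι] [Countable ι]
    [MeasurableSingletonClass ι] (hind : iCondIndepFun m' hm' Y μ) (hY : ∀ i, Measurable (Y i))
    {κ : Ω → ι} (hκ : Measurable[m'] κ) {ψ : β → ℝ} (hψ : Measurable ψ) {C : ℝ}
    (hψC : ∀ i, ∀ᵐ ω ∂μ, |ψ (Y i ω)| ≤ C) :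
    iCondIndepFun m' hm' Y (μ.tilted fun ω => ψ (Y (κ ω) ω)) := by
  set ρ : Ω → ℝ := fun ω => ψ (Y (κ ω) ω)
  set φ : β → ℝ := fun y => Real.exp (ψ y)
  have hYκ : Measurable fun ω => Y (κ ω) ω :=
    (measurable_from_prod_countable_right (f := fun p : ι × Ω => Y p.1 p.2) hY).comp
      ((hκ.mono hm' le_rfl).prodMk measurable_id)
  have hφY : ∀ i, Integrable (φ ∘ Y i) μ := fun i =>
    integrable_exp_of_ae_abs_le (hψ.comp (hY i)).aemeasurable (hψC i)
  have hρ : Integrable (fun ω => Real.exp (ρ ω)) μ :=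
    integrable_exp_of_ae_abs_le (hψ.comp hYκ).aemeasurable
      ((ae_all_iff.2 hψC).mono fun ω h => h (κ ω))
  have hD : ∀ i, ∀ᵐ ω ∂μ, μ[φ ∘ Y i|m'] ω ≠ 0 := fun i => by
    have hlow := condExp_mono (m := m') (integrable_const (Real.exp (-C))) (hφY i)
      ((hψC i).mono fun ω h => Real.exp_le_exp.2 (neg_le_of_abs_le h))
    rw [condExp_const hm'] at hlow
    filter_upwards [hlow] with ω h using ((Real.exp_pos _).trans_le h).ne'
  rw [iCondIndepFun_iff_condExp_inter_preimage_eq_mul _ Y hY]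
  intro S sets hsets
  have hpre : ∀ i ∈ S, MeasurableSet (Y i ⁻¹' sets i) := fun i hi => hY i (hsets i hi)
  have hinter : MeasurableSet (⋂ i ∈ S, Y i ⁻¹' sets i) :=
    .biInter S.countable_toSet hpre
  set N : Set Ω → Ω → ℝ := fun A => μ[A.indicator fun ω => Real.exp (ρ ω)|m']
  set D := μ[fun ω => Real.exp (ρ ω)|m']
  have hfactor : ∀ᵐ ω ∂μ, N (⋂ i ∈ S, Y i ⁻¹' sets i) ω / D ω
      = ∏ i ∈ S, N (Y i ⁻¹' sets i) ω / D ω := by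
    have hpiece : ∀ a, ∀ᵐ ω ∂μ, κ ω = a → N (⋂ i ∈ S, Y i ⁻¹' sets i) ω / D ω
        = ∏ i ∈ S, N (Y i ⁻¹' sets i) ω / D ω := by
      intro a
      have hκa : MeasurableSet[m'] (κ ⁻¹' {a}) := hκ (measurableSet_singleton a)
      have hρa : EqOn (fun ω => Real.exp (ρ ω)) (φ ∘ Y a) (κ ⁻¹' {a}) := fun ω hω => by
        simp only [ρ, φ, Function.comp, show κ ω = a from hω]
      have hNa : ∀ A, MeasurableSet A → ∀ᵐ ω ∂μ, κ ω = a →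
          N A ω = μ[A.indicator (φ ∘ Y a)|m'] ω := fun A hA =>
        condExp_ae_eq_of_eqOn (hρ.indicator hA) ((hφY a).indicator hA) hκa
          (fun ω hω => by simp only [indicator_apply, hρa hω])
      have hDa : ∀ᵐ ω ∂μ, κ ω = a → D ω = μ[φ ∘ Y a|m'] ω :=
        condExp_ae_eq_of_eqOn hρ (hφY a) hκa hρa
      filter_upwards [hind.condExp_indicator_biInter_comp_div hY a (φ := φ) hψ.exp (hφY a) (hD a)
        S hsets, hNa _ hinter, hDa,
        (Filter.eventually_all_finset S).2 fun i hi => hNa _ (hpre i hi)] with ω h hN hDω hNi hω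
      rw [hN hω, hDω hω, h]
      exact Finset.prod_congr rfl fun i hi => by rw [hNi i hi hω]
    filter_upwards [ae_all_iff.2 hpiece] with ω h using h (κ ω) rfl
  calc (μ.tilted ρ)⟦⋂ i ∈ S, Y i ⁻¹' sets i | m'⟧
      =ᵐ[μ.tilted ρ] fun ω => N (⋂ i ∈ S, Y i ⁻¹' sets i) ω / D ω :=
        condExp_tilted_indicator_ae_eq hm' hρ hinter
    _ =ᵐ[μ.tilted ρ] fun ω => ∏ i ∈ S, N (Y i ⁻¹' sets i) ω / D ω :=
        (tilted_absolutelyContinuous μ ρ).ae_le hfactor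
    _ =ᵐ[μ.tilted ρ] ∏ i ∈ S, (μ.tilted ρ)⟦Y i ⁻¹' sets i | m'⟧ := by
        filter_upwards [(Filter.eventually_all_finset S).2 fun i hi =>
          condExp_tilted_indicator_ae_eq hm' hρ (hpre i hi)] with ω h
        rw [Finset.prod_apply]
        exact Finset.prod_congr rfl fun i hi => (h i hi).symm

end ProbabilityTheory

end

theorem stmt3_general {Ω 𝒳 𝒜 : Type*} [MeasurableSpace Ω] [StandardBorelSpace Ω]
    [MeasurableSpace 𝒳] [MeasurableSpace 𝒜] [Fintype 𝒜] [MeasurableSingletonClass 𝒜]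
    (μ : Measure Ω) [IsProbabilityMeasure μ]
    (X : Ω → 𝒳) (Y : 𝒜 → Ω → ℝ) (M : ℝ)
    (hX : Measurable X) (hY : ∀ a, Measurable (Y a))
    (hbound : ∀ a, ∀ᵐ ω ∂μ, Y a ω ∈ Set.Icc 0 M)
    (π : 𝒳 → 𝒜) (hπ : Measurable π)
    (αstar : ℝ)
    -- mutual conditional independence of the rewards given `X` under `P0`:
    (hindep : iCondIndepFun (MeasurableSpace.comap X inferInstance) hX.comap_le
      (m := fun _ : 𝒜 => (inferInstance : MeasurableSpace ℝ)) Y μ) :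
    iCondIndepFun (MeasurableSpace.comap X inferInstance) hX.comap_le
      (m := fun _ : 𝒜 => (inferInstance : MeasurableSpace ℝ)) Y
      (μ.tilted fun ω => -Y (π (X ω)) ω / αstar) := by
  refine hindep.tilted_of_selected_coordinate hY (hπ.comp (Measurable.of_comap_le le_rfl))
    (ψ := fun y => -y / αstar) (measurable_id.neg.div_const αstar) (C := M / |αstar|)
    fun a => ?_
  filter_upwards [hbound a] with ω ⟨h₀, h₁⟩
  rw [neg_div, abs_neg, abs_div, abs_of_nonneg h₀]
  exact div_le_div_of_nonneg_right h₁ (abs_nonneg αstar)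

/-- **Conditional independence is preserved by the worst-case tilting.** In the batch
contextual bandit setup with the positive-density assumption, if the rewards
`Y(a^1), …, Y(a^d)` are mutually conditionally independent given `X` under `P0`, then they
remain mutually conditionally independent given `X` under the tilted worst-case measure
`P(π)` with `dP(π)/dP0 = exp(−Y(π(X))/α*(π)) / E[exp(−Y(π(X))/α*(π))]`, where
`α*(π) ∈ (0, ∞)` is the unique maximizer of the dual objective
`φ(π, α) = −α log E[exp(−Y(π(X))/α)] − αδ` over `α ≥ 0`. -/
theorem stmt3 {Ω 𝒳 𝒜 : Type*} [MeasurableSpace Ω] [StandardBorelSpace Ω]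
    [MeasurableSpace 𝒳] [MeasurableSpace 𝒜] [Fintype 𝒜] [MeasurableSingletonClass 𝒜]
    (μ : Measure Ω) [IsProbabilityMeasure μ]
    (X : Ω → 𝒳) (Y : 𝒜 → Ω → ℝ) (M b : ℝ) (hb : 0 < b)
    (hX : Measurable X) (hY : ∀ a, Measurable (Y a))
    (hbound : ∀ a, ∀ᵐ ω ∂μ, Y a ω ∈ Set.Icc 0 M)
    -- positive-density assumption: `Y(a) | X` has conditional density `f a x ≥ b` on `[0, M]`:
    (f : 𝒜 → 𝒳 → ℝ → ℝ) (hfmeas : ∀ a, Measurable (Function.uncurry (f a)))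
    (hfpos : ∀ a x, ∀ y ∈ Set.Icc (0 : ℝ) M, b ≤ f a x y)
    (hfzero : ∀ a x, ∀ y : ℝ, y ∉ Set.Icc (0 : ℝ) M → f a x y = 0)
    (hdensity : ∀ (a : 𝒜) (s : Set 𝒳), MeasurableSet s → ∀ B : Set ℝ, MeasurableSet B →
      (μ {ω | X ω ∈ s ∧ Y a ω ∈ B}).toReal
        = ∫ ω in X ⁻¹' s, (∫ y in B, f a (X ω) y) ∂μ)
    (π : 𝒳 → 𝒜) (hπ : Measurable π) (δ : ℝ) (hδ : 0 < δ)
    (αstar : ℝ) (hαstar : 0 < αstar)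
    -- `αstar` is the unique maximizer of the dual objective over `α ≥ 0` (with the value at
    -- `α = 0` given by the essential infimum):
    (hmax : ∀ β : ℝ, 0 ≤ β →
      dualKL μ (fun ω => Y (π (X ω)) ω) δ β ≤ dualKL μ (fun ω => Y (π (X ω)) ω) δ αstar)
    (huniq : ∀ β : ℝ, 0 ≤ β →
      dualKL μ (fun ω => Y (π (X ω)) ω) δ β = dualKL μ (fun ω => Y (π (X ω)) ω) δ αstar →
      β = αstar)
    -- mutual conditional independence of the rewards given `X` under `P0`:
    (hindep : iCondIndepFun (MeasurableSpace.comap X inferInstance) hX.comap_le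
      (m := fun _ : 𝒜 => (inferInstance : MeasurableSpace ℝ)) Y μ) :
    iCondIndepFun (MeasurableSpace.comap X inferInstance) hX.comap_le
      (m := fun _ : 𝒜 => (inferInstance : MeasurableSpace ℝ)) Y
      (μ.tilted fun ω => -Y (π (X ω)) ω / αstar) :=
  stmt3_general μ X Y M hX hY hbound π hπ αstar hindep
end

section
/- Let δ > 0, let w_1, …, w_n ≥ 0 with Σ_i w_i > 0, and let y_1, …, y_n ≥ 0. Then the function f(α) = −α log( (Σ_{i=1}^n w_i exp(−y_i/α)) / (Σ_{i=1}^n w_i) ) − αδ is concave on (0, ∞). Moreover, if there exist indices i ≠ j with w_i > 0, w_j > 0, y_i ≠ y_j, and y_i, y_j both nonzero, then f is strictly concave on (0, ∞). -/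
/-!
With `h t = log (∑ i, w i * exp (-y i * t)) + const`, the objective is `α ↦ -(α * h α⁻¹)`.
The log-sum-exp part of `h` is convex by Hölder's inequality, which here reduces to termwise
weighted AM-GM after normalising both sums to `1`; AM-GM is strict at an index where the two
normalised terms differ, and two positive weights carrying distinct rewards force such an index.
Convexity and strict convexity then pass from `h` to its perspective `α ↦ α * h α⁻¹` on `(0, ∞)`,
since `(a x + b y) h((a x + b y)⁻¹)` is `a x + b y` times `h` of the convex combination of
`x⁻¹, y⁻¹` with weights `a x / (a x + b y)` and `b y / (a x + b y)`.
-/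

open Real Set

section Holder

variable {ι : Type*} (s : Finset ι) {w f g : ι → ℝ} {a b : ℝ}

private lemma sum_mul_rpow_mul_rpow_eq (hf : ∀ i ∈ s, 0 ≤ f i) (hg : ∀ i ∈ s, 0 ≤ g i)
    (hF : 0 < ∑ i ∈ s, w i * f i) (hG : 0 < ∑ i ∈ s, w i * g i) :
    ∑ i ∈ s, w i * (f i ^ a * g i ^ b) =
      (∑ i ∈ s, w i * f i) ^ a * (∑ i ∈ s, w i * g i) ^ b *
        ∑ i ∈ s, w i * ((f i / ∑ j ∈ s, w j * f j) ^ a * (g i / ∑ j ∈ s, w j * g j) ^ b) := by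
  rw [Finset.mul_sum]
  refine Finset.sum_congr rfl fun i hi => ?_
  rw [div_rpow (hf i hi) hF.le, div_rpow (hg i hi) hG.le]
  have := rpow_pos_of_pos hF a
  have := rpow_pos_of_pos hG b
  field_simp

private lemma sum_mul_add_div_eq_one (hab : a + b = 1)
    (hF : 0 < ∑ i ∈ s, w i * f i) (hG : 0 < ∑ i ∈ s, w i * g i) :
    ∑ i ∈ s, w i * (a * (f i / ∑ j ∈ s, w j * f j) + b * (g i / ∑ j ∈ s, w j * g j)) = 1 :=
  calc _ = a / (∑ j ∈ s, w j * f j) * (∑ i ∈ s, w i * f i)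
        + b / (∑ j ∈ s, w j * g j) * (∑ i ∈ s, w i * g i) := by
        rw [Finset.mul_sum, Finset.mul_sum, ← Finset.sum_add_distrib]
        exact Finset.sum_congr rfl fun i _ => by ring
    _ = 1 := by rw [div_mul_cancel₀ a hF.ne', div_mul_cancel₀ b hG.ne', hab]

theorem Real.sum_mul_rpow_mul_rpow_le (hw : ∀ i ∈ s, 0 ≤ w i) (hf : ∀ i ∈ s, 0 ≤ f i)
    (hg : ∀ i ∈ s, 0 ≤ g i) (ha : 0 ≤ a) (hb : 0 ≤ b) (hab : a + b = 1)
    (hF : 0 < ∑ i ∈ s, w i * f i) (hG : 0 < ∑ i ∈ s, w i * g i) :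
    ∑ i ∈ s, w i * (f i ^ a * g i ^ b) ≤ (∑ i ∈ s, w i * f i) ^ a * (∑ i ∈ s, w i * g i) ^ b := by
  rw [sum_mul_rpow_mul_rpow_eq s hf hg hF hG]
  refine mul_le_of_le_one_right (by positivity) ?_
  rw [← sum_mul_add_div_eq_one s hab hF hG]
  gcongr with i hi
  · exact hw i hi
  · exact geom_mean_le_arith_mean2_weighted ha hb (div_nonneg (hf i hi) hF.le)
      (div_nonneg (hg i hi) hG.le) hab

theorem Real.sum_mul_rpow_mul_rpow_lt (hw : ∀ i ∈ s, 0 ≤ w i) (hf : ∀ i ∈ s, 0 ≤ f i)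
    (hg : ∀ i ∈ s, 0 ≤ g i) (ha : 0 < a) (hb : 0 < b) (hab : a + b = 1)
    (hF : 0 < ∑ i ∈ s, w i * f i) (hG : 0 < ∑ i ∈ s, w i * g i)
    (hfg : ∃ k ∈ s, 0 < w k ∧ f k / ∑ i ∈ s, w i * f i ≠ g k / ∑ i ∈ s, w i * g i) :
    ∑ i ∈ s, w i * (f i ^ a * g i ^ b) < (∑ i ∈ s, w i * f i) ^ a * (∑ i ∈ s, w i * g i) ^ b := by
  obtain ⟨k, hk, hwk, hne⟩ := hfg
  rw [sum_mul_rpow_mul_rpow_eq s hf hg hF hG]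
  refine mul_lt_of_lt_one_right (by positivity) ?_
  rw [← sum_mul_add_div_eq_one s hab hF hG]
  refine Finset.sum_lt_sum (fun i hi => ?_) ⟨k, hk, ?_⟩
  · exact mul_le_mul_of_nonneg_left (geom_mean_le_arith_mean2_weighted ha.le hb.le
      (div_nonneg (hf i hi) hF.le) (div_nonneg (hg i hi) hG.le) hab) (hw i hi)
  · exact mul_lt_mul_of_pos_left ((geom_mean_lt_arith_mean2_weighted_iff_of_pos ha hb
      (div_nonneg (hf k hk) hF.le) (div_nonneg (hg k hk) hG.le) hab).2 hne) hwk

end Holder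

section LogSumExp

variable {ι : Type*} (s : Finset ι) {w : ι → ℝ} (c : ι → ℝ)

lemma Finset.sum_mul_exp_pos (u : ι → ℝ) (hw : ∀ i ∈ s, 0 ≤ w i) (hws : 0 < ∑ i ∈ s, w i) :
    0 < ∑ i ∈ s, w i * exp (u i) := by
  obtain ⟨i, hi, hwi⟩ := Finset.exists_ne_zero_of_sum_ne_zero hws.ne'
  exact Finset.sum_pos' (fun j hj => mul_nonneg (hw j hj) (exp_pos _).le)
    ⟨i, hi, mul_pos ((hw i hi).lt_of_ne' hwi) (exp_pos _)⟩

private lemma exp_mul_add_mul (x t u a b : ℝ) :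
    exp (x * (a * t + b * u)) = exp (x * t) ^ a * exp (x * u) ^ b := by
  rw [← exp_mul, ← exp_mul, ← exp_add]
  ring_nf

private lemma log_rpow_mul_rpow {P Q : ℝ} (hP : 0 < P) (hQ : 0 < Q) (a b : ℝ) :
    log (P ^ a * Q ^ b) = a * log P + b * log Q := by
  rw [log_mul (rpow_pos_of_pos hP a).ne' (rpow_pos_of_pos hQ b).ne', log_rpow hP, log_rpow hQ]

theorem convexOn_log_sum_mul_exp (hw : ∀ i ∈ s, 0 ≤ w i) (hws : 0 < ∑ i ∈ s, w i) :
    ConvexOn ℝ univ fun t => log (∑ i ∈ s, w i * exp (c i * t)) := by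
  refine convexOn_iff_forall_pos.2 ⟨convex_univ, fun t _ u _ a b ha hb hab => ?_⟩
  have hP := s.sum_mul_exp_pos (fun i => c i * t) hw hws
  have hQ := s.sum_mul_exp_pos (fun i => c i * u) hw hws
  simp only [smul_eq_mul, exp_mul_add_mul]
  rw [← log_rpow_mul_rpow hP hQ]
  refine log_le_log ?_ (sum_mul_rpow_mul_rpow_le s hw (fun i _ => (exp_pos _).le)
    (fun i _ => (exp_pos _).le) ha.le hb.le hab hP hQ)
  simpa only [exp_mul_add_mul] using s.sum_mul_exp_pos (fun i => c i * (a * t + b * u)) hw hws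

theorem strictConvexOn_log_sum_mul_exp (hw : ∀ i ∈ s, 0 ≤ w i) {i j : ι} (hi : i ∈ s)
    (hj : j ∈ s) (hwi : 0 < w i) (hwj : 0 < w j) (hc : c i ≠ c j) :
    StrictConvexOn ℝ univ fun t => log (∑ i ∈ s, w i * exp (c i * t)) := by
  refine ⟨convex_univ, fun t _ u _ htu a b ha hb hab => ?_⟩
  have hws : 0 < ∑ i ∈ s, w i := Finset.sum_pos' hw ⟨i, hi, hwi⟩
  set P := ∑ i ∈ s, w i * exp (c i * t)
  set Q := ∑ i ∈ s, w i * exp (c i * u)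
  have hP : 0 < P := s.sum_mul_exp_pos (fun i => c i * t) hw hws
  have hQ : 0 < Q := s.sum_mul_exp_pos (fun i => c i * u) hw hws
  have hne : ∃ k ∈ s, 0 < w k ∧ exp (c k * t) / P ≠ exp (c k * u) / Q := by
    by_contra! h
    have hratio : ∀ k ∈ s, 0 < w k → exp (c k * (t - u)) = P / Q := fun k hk hwk => by
      rw [mul_sub, exp_sub, div_eq_div_iff (exp_pos _).ne' hQ.ne', mul_comm P,
        ← div_eq_div_iff hP.ne' hQ.ne', h k hk hwk]
    have := exp_injective ((hratio i hi hwi).trans (hratio j hj hwj).symm)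
    exact hc (mul_right_cancel₀ (sub_ne_zero.2 htu) this)
  simp only [smul_eq_mul, exp_mul_add_mul]
  rw [← log_rpow_mul_rpow hP hQ]
  refine log_lt_log ?_ (sum_mul_rpow_mul_rpow_lt s hw (fun i _ => (exp_pos _).le)
    (fun i _ => (exp_pos _).le) ha hb hab hP hQ hne)
  simpa only [exp_mul_add_mul] using s.sum_mul_exp_pos (fun i => c i * (a * t + b * u)) hw hws

end LogSumExp

section Perspective

variable {h : ℝ → ℝ} {x y a b : ℝ}

private lemma perspective_weights_sum (hs : 0 < a * x + b * y) :
    a * x / (a * x + b * y) + b * y / (a * x + b * y) = 1 := by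
  rw [← add_div, div_self hs.ne']

private lemma perspective_weights (hx : 0 < x) (hy : 0 < y) (hab : a + b = 1)
    (hs : 0 < a * x + b * y) :
    (a * x / (a * x + b * y)) • x⁻¹ + (b * y / (a * x + b * y)) • y⁻¹ = (a * x + b * y)⁻¹ := by
  simp only [smul_eq_mul]
  field_simp
  rw [hab]

private lemma mul_perspective_combination (hs : 0 < a * x + b * y) (H₁ H₂ : ℝ) :
    (a * x + b * y) * ((a * x / (a * x + b * y)) • H₁ + (b * y / (a * x + b * y)) • H₂) =
      a * (x * H₁) + b * (y * H₂) := by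
  simp only [smul_eq_mul]
  field_simp

theorem ConvexOn.mul_comp_inv (hh : ConvexOn ℝ (Ioi 0) h) :
    ConvexOn ℝ (Ioi 0) fun x => x * h x⁻¹ := by
  refine ⟨convex_Ioi 0, fun x (hx : 0 < x) y (hy : 0 < y) a b ha hb hab => ?_⟩
  have hs : 0 < a * x + b * y := convex_Ioi (0 : ℝ) hx hy ha hb hab
  have key := hh.2 (inv_pos.2 hx) (inv_pos.2 hy) (by positivity) (by positivity)
    (perspective_weights_sum hs)
  rw [perspective_weights hx hy hab hs] at key
  simp only [smul_eq_mul] at hs ⊢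
  rw [← mul_perspective_combination hs]
  exact mul_le_mul_of_nonneg_left key hs.le

theorem StrictConvexOn.mul_comp_inv (hh : StrictConvexOn ℝ (Ioi 0) h) :
    StrictConvexOn ℝ (Ioi 0) fun x => x * h x⁻¹ := by
  refine ⟨convex_Ioi 0, fun x (hx : 0 < x) y (hy : 0 < y) hxy a b ha hb hab => ?_⟩
  have hs : 0 < a * x + b * y := convex_Ioi (0 : ℝ) hx hy ha.le hb.le hab
  have key := hh.2 (inv_pos.2 hx) (inv_pos.2 hy) (inv_injective.ne hxy) (by positivity)
    (by positivity) (perspective_weights_sum hs)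
  rw [perspective_weights hx hy hab hs] at key
  simp only [smul_eq_mul] at hs ⊢
  rw [← mul_perspective_combination hs]
  exact mul_lt_mul_of_pos_left key hs

end Perspective

theorem stmt4_general (δ : ℝ) (n : ℕ) (w y : Fin n → ℝ)
    (hw : ∀ i, 0 ≤ w i) (hwpos : 0 < ∑ i, w i) :
    ConcaveOn ℝ (Set.Ioi (0 : ℝ))
      (fun α : ℝ =>
        -α * Real.log ((∑ i, w i * Real.exp (-y i / α)) / ∑ i, w i) - α * δ) ∧
    ((∃ i j : Fin n, i ≠ j ∧ 0 < w i ∧ 0 < w j ∧ y i ≠ y j ∧ y i ≠ 0 ∧ y j ≠ 0) →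
      StrictConcaveOn ℝ (Set.Ioi (0 : ℝ))
        (fun α : ℝ =>
          -α * Real.log ((∑ i, w i * Real.exp (-y i / α)) / ∑ i, w i) - α * δ)) := by
  have hw' : ∀ i ∈ Finset.univ, 0 ≤ w i := fun i _ => hw i
  let h : ℝ → ℝ := fun t => log (∑ i, w i * exp (-y i * t)) + (δ - log (∑ i, w i))
  have hf : (fun α : ℝ => -α * log ((∑ i, w i * exp (-y i / α)) / ∑ i, w i) - α * δ) =
      fun α => -(α * h α⁻¹) := by
    funext α
    rw [log_div (Finset.univ.sum_mul_exp_pos _ hw' hwpos).ne' hwpos.ne']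
    simp only [h, div_eq_mul_inv]
    ring
  have hh : ConvexOn ℝ (Ioi 0) h :=
    ((convexOn_log_sum_mul_exp _ (fun i => -y i) hw' hwpos).add_const _).subset
      (subset_univ _) (convex_Ioi 0)
  refine hf ▸ ⟨hh.mul_comp_inv.neg, ?_⟩
  rintro ⟨i, j, -, hwi, hwj, hyij, -, -⟩
  have hh' : StrictConvexOn ℝ (Ioi 0) h :=
    ((strictConvexOn_log_sum_mul_exp _ (fun i => -y i) hw' (Finset.mem_univ i)
      (Finset.mem_univ j) hwi hwj (neg_injective.ne hyij)).add_const _).subset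
      (subset_univ _) (convex_Ioi 0)
  exact hh'.mul_comp_inv.neg

/-- **Concavity of the empirical dual objective.**
`f(α) = −α log( (Σ w_i exp(−y_i/α)) / (Σ w_i) ) − αδ` is concave on `(0, ∞)`, and strictly
concave as soon as the data contain two distinct nonzero reward values with positive weights. -/
theorem stmt4 (δ : ℝ) (hδ : 0 < δ) (n : ℕ) (w y : Fin n → ℝ)
    (hw : ∀ i, 0 ≤ w i) (hwpos : 0 < ∑ i, w i) (hy : ∀ i, 0 ≤ y i) :
    ConcaveOn ℝ (Set.Ioi (0 : ℝ))
      (fun α : ℝ =>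
        -α * Real.log ((∑ i, w i * Real.exp (-y i / α)) / ∑ i, w i) - α * δ) ∧
    ((∃ i j : Fin n, i ≠ j ∧ 0 < w i ∧ 0 < w j ∧ y i ≠ y j ∧ y i ≠ 0 ∧ y j ≠ 0) →
      StrictConcaveOn ℝ (Set.Ioi (0 : ℝ))
        (fun α : ℝ =>
          -α * Real.log ((∑ i, w i * Real.exp (-y i / α)) / ∑ i, w i) - α * δ)) :=
  stmt4_general δ n w y hw hwpos
end

section
/- Let δ > 0 and let P1, P2 be probability measures on ℝ supported on [0, ∞). Then | sup_{α ≥ 0} { −α log E_{P1}[exp(−Y/α)] − αδ } − sup_{α ≥ 0} { −α log E_{P2}[exp(−Y/α)] − αδ } | ≤ sup_{t ∈ [0,1]} | q_{P1}(t) − q_{P2}(t) |, where Y denotes the identity random variable under each measure. -/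
open MeasureTheory Real Set
open scoped ENNReal

/-- The `t`-quantile of a probability measure `P` on `ℝ`:
`q_P(t) = inf { x : t ≤ F_P(x) }`, where `F_P(x) = P(-∞, x]`. -/
noncomputable def quantile (P : Measure ℝ) (t : ℝ) : ℝ :=
  sInf {x : ℝ | t ≤ (P (Set.Iic x)).toReal}

/-- The KL-DRO dual value `sup_{α ≥ 0} { −α log E_P[exp(−Y/α)] − αδ }` of a distribution `P`
on `ℝ` (here `Y` is the identity random variable under `P`). -/
noncomputable def dualValue (δ : ℝ) (P : Measure ℝ) : ℝ :=
  sSup {r : ℝ | ∃ α : ℝ, 0 ≤ α ∧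
    r = -α * Real.log (∫ y, Real.exp (-y / α) ∂P) - α * δ}

/-!
Write `ε` for the uniform distance between the two quantile functions. Comparing quantiles
turns into comparing distribution functions, `F₂(x) ≤ F₁(x + ε)`, and the layer-cake formula
then gives `e^{-ε/α} E_{P2}[e^{-Y/α}] ≤ E_{P1}[e^{-Y/α}]` for every `α > 0`. Taking logarithms
and multiplying by `-α`, every term of the supremum defining the dual value of `P1` exceeds the
corresponding term for `P2` by at most `ε`; the support condition makes all exponential moments
finite and positive, and `δ > 0` keeps the suprema finite.
-/

open ProbabilityTheory

section Quantile

variable {P : Measure ℝ} [IsProbabilityMeasure P]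

lemma quantile_eq_sInf_cdf (t : ℝ) : quantile P t = sInf {x | t ≤ cdf P x} := by
  simp only [quantile, cdf_eq_real, measureReal_def]

lemma bddBelow_setOf_le_cdf (hP : P (Iio 0) = 0) {t : ℝ} (ht : 0 < t) :
    BddBelow {x | t ≤ cdf P x} := by
  refine ⟨0, fun x hx => not_lt.mp fun hx0 => ht.not_ge (hx.trans ?_)⟩
  calc cdf P x = P.real (Iic x) := cdf_eq_real P x
    _ ≤ P.real (Iio 0) := measureReal_mono (Iic_subset_Iio.mpr hx0)
    _ = 0 := by rw [measureReal_def, hP, ENNReal.toReal_zero]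

lemma quantile_le_of_le_cdf (hP : P (Iio 0) = 0) {t x : ℝ} (ht : 0 < t) (hx : t ≤ cdf P x) :
    quantile P t ≤ x := by
  rw [quantile_eq_sInf_cdf]
  exact csInf_le (bddBelow_setOf_le_cdf hP ht) hx

lemma le_cdf_quantile (hP : P (Iio 0) = 0) {t : ℝ} (ht : 0 < t) (ht1 : t < 1) :
    t ≤ cdf P (quantile P t) := by
  set S := {x | t ≤ cdf P x}
  have hS : S.Nonempty := ((tendsto_cdf_atTop P).eventually (eventually_ge_nhds ht1)).exists
  have hbdd := bddBelow_setOf_le_cdf hP ht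
  have hupper : ∀ x ∈ Ioi (sInf S), t ≤ cdf P x := fun x hx => by
    obtain ⟨y, hy, hyx⟩ := (csInf_lt_iff hbdd hS).mp hx
    exact hy.trans (monotone_cdf P hyx.le)
  rw [quantile_eq_sInf_cdf]
  exact ge_of_tendsto (((cdf P).right_continuous _).tendsto.mono_left
    (nhdsWithin_mono _ Ioi_subset_Ici_self)) (eventually_nhdsWithin_of_forall hupper)

end Quantile

lemma cdf_le_cdf_add_of_quantile_le {P₁ P₂ : Measure ℝ} [IsProbabilityMeasure P₁]
    [IsProbabilityMeasure P₂] (hP₁ : P₁ (Iio 0) = 0) (hP₂ : P₂ (Iio 0) = 0) {ε : ℝ}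
    (hq : ∀ t ∈ Ioo (0 : ℝ) 1, quantile P₁ t ≤ quantile P₂ t + ε) (x : ℝ) :
    cdf P₂ x ≤ cdf P₁ (x + ε) := by
  by_contra! hlt
  obtain ⟨t, hFt, htF⟩ := exists_between hlt
  have ht0 : 0 < t := (cdf_nonneg P₁ _).trans_lt hFt
  have ht1 : t < 1 := htF.trans_le (cdf_le_one P₂ x)
  have hq₁ : quantile P₁ t ≤ x + ε :=
    (hq t ⟨ht0, ht1⟩).trans (by linarith [quantile_le_of_le_cdf hP₂ ht0 htF.le])
  exact hFt.not_ge ((le_cdf_quantile hP₁ ht0 ht1).trans (monotone_cdf P₁ hq₁))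

section ExpMoment

lemma setOf_le_exp_neg_div {α t : ℝ} (hα : 0 < α) (ht : 0 < t) :
    {y | t ≤ exp (-y / α)} = Iic (-(α * log t)) := by
  ext y
  change t ≤ exp (-y / α) ↔ y ≤ -(α * log t)
  rw [← log_le_iff_le_exp ht, le_div_iff₀ hα]
  constructor <;> intro h <;> linarith

lemma lintegral_exp_neg_add_div_le {μ ν : Measure ℝ} {ε α : ℝ} (hα : 0 < α)
    (h : ∀ x, ν (Iic x) ≤ μ (Iic (x + ε))) :
    ∫⁻ y, ENNReal.ofReal (exp (-(y + ε) / α)) ∂ν ≤ ∫⁻ y, ENNReal.ofReal (exp (-y / α)) ∂μ := by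
  rw [lintegral_eq_lintegral_meas_le ν (.of_forall fun _ => (exp_pos _).le) (by fun_prop),
    lintegral_eq_lintegral_meas_le μ (.of_forall fun _ => (exp_pos _).le) (by fun_prop)]
  refine setLIntegral_mono' measurableSet_Ioi fun t (ht : 0 < t) => ?_
  have hshift : {y | t ≤ exp (-(y + ε) / α)} = (· + ε) ⁻¹' {y | t ≤ exp (-y / α)} := rfl
  rw [hshift, setOf_le_exp_neg_div hα ht, preimage_add_const_Iic]
  simpa using h (-(α * log t) - ε)

variable {P : Measure ℝ}

lemma integrable_exp_neg_div [IsFiniteMeasure P] (hP : P (Iio 0) = 0) {α : ℝ} (hα : 0 ≤ α) :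
    Integrable (fun y => exp (-y / α)) P := by
  refine (integrable_const (1 : ℝ)).mono' (by fun_prop) ?_
  have hnonneg : ∀ᵐ y ∂P, 0 ≤ y :=
    (measure_eq_zero_iff_ae_notMem.mp hP).mono fun _ h => not_lt.mp h
  filter_upwards [hnonneg] with y hy
  rw [norm_of_nonneg (exp_pos _).le, exp_le_one_iff]
  exact div_nonpos_of_nonpos_of_nonneg (neg_nonpos.mpr hy) hα

lemma integral_exp_neg_div_pos [IsProbabilityMeasure P] (hP : P (Iio 0) = 0) {α : ℝ}
    (hα : 0 ≤ α) : 0 < ∫ y, exp (-y / α) ∂P :=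
  integral_exp_pos (integrable_exp_neg_div hP hα)

lemma exp_neg_div_mul_cdf_le_integral [IsProbabilityMeasure P] (hP : P (Iio 0) = 0) {α : ℝ}
    (hα : 0 < α) (M : ℝ) : exp (-M / α) * cdf P M ≤ ∫ y, exp (-y / α) ∂P := by
  have hlevel : {y | exp (-M / α) ≤ exp (-y / α)} = Iic M := by
    ext y
    simp [div_le_div_iff_of_pos_right hα]
  have hmarkov := mul_meas_ge_le_integral_of_nonneg (.of_forall fun _ => (exp_pos _).le)
    (integrable_exp_neg_div hP hα.le) (exp (-M / α))
  rwa [hlevel, ← cdf_eq_real] at hmarkov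

lemma exp_neg_div_mul_integral_le {P₁ P₂ : Measure ℝ} [IsFiniteMeasure P₁]
    (hP₁ : P₁ (Iio 0) = 0) {ε α : ℝ} (hα : 0 < α) (h : ∀ x, P₂ (Iic x) ≤ P₁ (Iic (x + ε))) :
    exp (-ε / α) * ∫ y, exp (-y / α) ∂P₂ ≤ ∫ y, exp (-y / α) ∂P₁ := by
  have hshift : exp (-ε / α) * ∫ y, exp (-y / α) ∂P₂ = ∫ y, exp (-(y + ε) / α) ∂P₂ := by
    rw [← integral_const_mul]
    congr 1 with y
    rw [← exp_add]
    ring_nf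
  rw [hshift,
    integral_eq_lintegral_of_nonneg_ae (.of_forall fun _ => (exp_pos _).le) (by fun_prop),
    integral_eq_lintegral_of_nonneg_ae (.of_forall fun _ => (exp_pos _).le) (by fun_prop)]
  exact ENNReal.toReal_mono (integrable_exp_neg_div hP₁ hα.le).lintegral_lt_top.ne
    (lintegral_exp_neg_add_div_le hα h)

end ExpMoment

section DualValue

variable {δ : ℝ} {P : Measure ℝ}

noncomputable def dualObjective (δ : ℝ) (P : Measure ℝ) (α : ℝ) : ℝ :=
  -α * log (∫ y, exp (-y / α) ∂P) - α * δ

@[simp]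
lemma dualObjective_zero : dualObjective δ P 0 = 0 := by
  simp [dualObjective]

lemma dualValue_le_of_forall {b : ℝ} (hb : 0 ≤ b) (h : ∀ α, 0 < α → dualObjective δ P α ≤ b) :
    dualValue δ P ≤ b := by
  refine Real.sSup_le ?_ hb
  rintro _ ⟨α, hα, rfl⟩
  rcases hα.eq_or_lt with rfl | hα
  · simpa using hb
  · exact h α hα

variable [IsProbabilityMeasure P]

/-- With `F_P(M) ≥ e^{-δ}`, Markov's inequality bounds every term by `max M 0`. -/
lemma exists_dualObjective_le (hδ : 0 < δ) (hP : P (Iio 0) = 0) :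
    ∃ M, ∀ α, 0 ≤ α → dualObjective δ P α ≤ M := by
  obtain ⟨M₀, hM₀⟩ := ((tendsto_cdf_atTop P).eventually
    (eventually_ge_nhds (exp_lt_one_iff.mpr (neg_lt_zero.mpr hδ)))).exists
  set M := max M₀ 0
  refine ⟨M, fun α hα => ?_⟩
  rcases hα.eq_or_lt with rfl | hα
  · exact dualObjective_zero.trans_le (le_max_right M₀ 0)
  have hexp : exp (-M / α + -δ) ≤ ∫ y, exp (-y / α) ∂P := by
    rw [exp_add]
    exact (mul_le_mul_of_nonneg_left (hM₀.trans (monotone_cdf P (le_max_left M₀ 0)))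
      (exp_pos _).le).trans (exp_neg_div_mul_cdf_le_integral hP hα M)
  have hlog := (le_log_iff_exp_le (integral_exp_neg_div_pos hP hα.le)).mpr hexp
  rw [← sub_eq_add_neg, sub_le_iff_le_add, div_le_iff₀ hα] at hlog
  simp only [dualObjective]
  linarith

lemma le_dualValue (hδ : 0 < δ) (hP : P (Iio 0) = 0) {α : ℝ} (hα : 0 ≤ α) :
    dualObjective δ P α ≤ dualValue δ P := by
  obtain ⟨M, hM⟩ := exists_dualObjective_le hδ hP
  exact le_csSup ⟨M, by rintro _ ⟨β, hβ, rfl⟩; exact hM β hβ⟩ ⟨α, hα, rfl⟩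

lemma dualValue_nonneg (hδ : 0 < δ) (hP : P (Iio 0) = 0) : 0 ≤ dualValue δ P := by
  simpa using le_dualValue hδ hP le_rfl

end DualValue

section Comparison

variable {δ ε : ℝ} {P₁ P₂ : Measure ℝ} [IsProbabilityMeasure P₁] [IsProbabilityMeasure P₂]

lemma dualObjective_le_add (hP₁ : P₁ (Iio 0) = 0) (hP₂ : P₂ (Iio 0) = 0) {α : ℝ} (hα : 0 < α)
    (h : ∀ x, P₂ (Iic x) ≤ P₁ (Iic (x + ε))) :
    dualObjective δ P₁ α ≤ dualObjective δ P₂ α + ε := by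
  have hI₂ := integral_exp_neg_div_pos hP₂ hα.le
  have hlog : -ε / α + log (∫ y, exp (-y / α) ∂P₂) ≤ log (∫ y, exp (-y / α) ∂P₁) := by
    rw [← log_exp (-ε / α), ← log_mul (exp_ne_zero _) hI₂.ne']
    exact log_le_log (by positivity) (exp_neg_div_mul_integral_le hP₁ hα h)
  rw [← le_sub_iff_add_le, div_le_iff₀ hα] at hlog
  simp only [dualObjective]
  linarith

lemma dualValue_le_add_of_quantile_le (hδ : 0 < δ) (hP₁ : P₁ (Iio 0) = 0)
    (hP₂ : P₂ (Iio 0) = 0) (hε : 0 ≤ ε)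
    (hq : ∀ t ∈ Ioo (0 : ℝ) 1, quantile P₁ t ≤ quantile P₂ t + ε) :
    dualValue δ P₁ ≤ dualValue δ P₂ + ε := by
  have hF : ∀ x, P₂ (Iic x) ≤ P₁ (Iic (x + ε)) := fun x => by
    rw [← ofReal_cdf, ← ofReal_cdf]
    exact ENNReal.ofReal_le_ofReal (cdf_le_cdf_add_of_quantile_le hP₁ hP₂ hq x)
  refine dualValue_le_of_forall (add_nonneg (dualValue_nonneg hδ hP₂) hε) fun α hα => ?_
  calc dualObjective δ P₁ α ≤ dualObjective δ P₂ α + ε := dualObjective_le_add hP₁ hP₂ hα hF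
    _ ≤ dualValue δ P₂ + ε := add_le_add_left (le_dualValue hδ hP₂ hα.le) ε

end Comparison

lemma ENNReal.ofReal_le_biSup_ofReal {ι : Type*} {s : Set ι} {f : ι → ℝ} {a : ℝ}
    (h : ∀ ε, 0 ≤ ε → (∀ t ∈ s, f t ≤ ε) → a ≤ ε) :
    ENNReal.ofReal a ≤ ⨆ t ∈ s, ENNReal.ofReal (f t) := by
  by_cases hR : ⨆ t ∈ s, ENNReal.ofReal (f t) = ⊤
  · exact hR ▸ le_top
  rw [← ENNReal.ofReal_toReal hR]
  refine ENNReal.ofReal_le_ofReal (h _ ENNReal.toReal_nonneg fun t ht => ?_)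
  rw [← ENNReal.ofReal_le_iff_le_toReal hR]
  exact le_iSup₂ (f := fun t (_ : t ∈ s) => ENNReal.ofReal (f t)) t ht

/-- **Quantile Lipschitz bound for KL-DRO dual values:** for probability measures `P1, P2`
supported on `[0, ∞)`, the difference of their DRO dual values is bounded by the uniform
distance between their quantile functions (the right-hand supremum is taken in `ℝ≥0∞` so that
the inequality is meaningful even when it is infinite). -/
theorem stmt9 (δ : ℝ) (hδ : 0 < δ) (P1 P2 : Measure ℝ)
    [IsProbabilityMeasure P1] [IsProbabilityMeasure P2]
    (hP1 : P1 (Set.Iio 0) = 0) (hP2 : P2 (Set.Iio 0) = 0) :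
    ENNReal.ofReal |dualValue δ P1 - dualValue δ P2| ≤
      ⨆ t ∈ Set.Icc (0 : ℝ) 1, ENNReal.ofReal |quantile P1 t - quantile P2 t| := by
  refine ENNReal.ofReal_le_biSup_ofReal fun ε hε hq => abs_sub_le_iff.mpr ⟨?_, ?_⟩
  · refine sub_le_iff_le_add'.mpr (dualValue_le_add_of_quantile_le hδ hP1 hP2 hε fun t ht => ?_)
    exact sub_le_iff_le_add'.mp (abs_sub_le_iff.mp (hq t (Ioo_subset_Icc_self ht))).1
  · refine sub_le_iff_le_add'.mpr (dualValue_le_add_of_quantile_le hδ hP2 hP1 hε fun t ht => ?_)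
    exact sub_le_iff_le_add'.mp (abs_sub_le_iff.mp (hq t (Ioo_subset_Icc_self ht))).2
end

section
/- Let k ∈ (1, ∞), δ > 0, set k_* = k/(k−1) and c_k(δ) = (1 + k(k−1)δ)^{1/k}, and let P be a probability measure under which the random variable Z satisfies 0 ≤ Z ≤ M almost surely. Then inf { E_Q[Z] : Q ≪ P, D_k(Q‖P) ≤ δ } = sup_{α ∈ ℝ} { −c_k(δ) · ( E_P[ ((α − Z)_+)^{k_*} ] )^{1/k_*} + α }. -/
open MeasureTheory Real Set
open scoped ENNReal

/-- The Cressie–Read function `f_k(t) = (t^k − kt + k − 1)/(k(k−1))` (for `t ≥ 0`). -/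
noncomputable def fCR (k t : ℝ) : ℝ := (t ^ k - k * t + k - 1) / (k * (k - 1))

/-- The Cressie–Read `f_k`-divergence `D_k(Q ‖ P) = ∫ f_k(dQ/dP) dP`, taken as a lower
Lebesgue integral in `ℝ≥0∞` (the integrand is nonnegative since `f_k ≥ 0`). -/
noncomputable def crDiv {Ω : Type*} [MeasurableSpace Ω] (k : ℝ) (Q P : Measure Ω) : ℝ≥0∞ :=
  ∫⁻ ω, ENNReal.ofReal (fCR k ((Q.rnDeriv P ω).toReal)) ∂P

/-!
Weak duality is Hölder's inequality. Writing `L = dQ/dP`, the constraint `D_k(Q‖P) ≤ δ` says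
exactly `‖L‖_k ≤ c_k(δ)`, and `E_Q[Z] = E_P[L Z] ≥ α − E_P[L (α − Z)_+]
≥ α − ‖L‖_k ‖(α − Z)_+‖_{k_*}` for every `α`.

For strong duality, the dual objective is continuous, equals `α` for `α ≤ 0` (as `Z ≥ 0`) and
tends to `−∞` as `α → ∞` (as `c_k(δ) > 1`), so it attains its maximum at some `α`. If
`E_P[(α − Z)_+^{k_*}] > 0`, the first-order condition at `α` says that the density proportional
to `(α − Z)_+^{k_* − 1}` has `k`-norm `c_k(δ)`; it is the equality case of Hölder, so it attains
the dual value. Otherwise `Z ≥ α` a.s., optimality against `α + ε` forces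
`P(Z ≤ α) ≥ c_k(δ)^{−k_*}`, and `P` conditioned on `{Z ≤ α}` is feasible with `E_Q[Z] = α`.
-/

open Filter Topology ProbabilityTheory

lemma fCR_nonneg {k t : ℝ} (hk : 1 < k) (ht : 0 ≤ t) : 0 ≤ fCR k t := by
  have bernoulli := one_add_mul_self_le_rpow_one_add (s := t - 1) (by linarith) hk.le
  rw [add_sub_cancel] at bernoulli
  exact div_nonneg (by linarith) (mul_nonneg (by linarith) (by linarith))

lemma rpow_eq_fCR {k : ℝ} (hk0 : k ≠ 0) (hk1 : k ≠ 1) (t : ℝ) :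
    t ^ k = k * (k - 1) * fCR k t + k * t - (k - 1) := by
  have : k - 1 ≠ 0 := sub_ne_zero.mpr hk1
  unfold fCR
  field_simp
  ring

lemma hasDerivAt_posPart_rpow {p : ℝ} (hp : 1 < p) (t : ℝ) :
    HasDerivAt (fun s : ℝ => max s 0 ^ p) (p * max t 0 ^ (p - 1)) t := by
  have hcont : ∀ r : ℝ, 0 < r → Continuous fun s : ℝ => max s 0 ^ r := fun r hr =>
    Continuous.rpow_const (by fun_prop) fun _ => Or.inr hr.le
  have hne : ∀ y ≠ 0, HasDerivAt (fun s : ℝ => max s 0 ^ p) (p * max y 0 ^ (p - 1)) y := by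
    intro y hy
    rcases hy.lt_or_gt with hy | hy
    · rw [max_eq_right hy.le, zero_rpow (by linarith), mul_zero]
      refine (hasDerivAt_const y (0 : ℝ)).congr_of_eventuallyEq ?_
      filter_upwards [Iio_mem_nhds hy] with s hs
      rw [max_eq_right hs.le, zero_rpow (by linarith)]
    · rw [max_eq_left hy.le]
      refine (hasDerivAt_rpow_const (Or.inl hy.ne')).congr_of_eventuallyEq ?_
      filter_upwards [Ioi_mem_nhds hy] with s hs
      rw [max_eq_left hs.le]
  rcases eq_or_ne t 0 with rfl | ht
  · exact hasDerivAt_of_hasDerivAt_of_ne hne (hcont p (by linarith)).continuousAt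
      (continuous_const.mul (hcont (p - 1) (by linarith))).continuousAt
  · exact hne t ht

lemma posPart_rpow_sub_one_mul {q : ℝ} (hq : 1 < q) (x : ℝ) :
    max x 0 ^ (q - 1) * x = max x 0 ^ q := by
  rcases le_total x 0 with hx | hx
  · rw [max_eq_right hx, zero_rpow (by linarith), zero_rpow (by linarith), zero_mul]
  · rw [max_eq_left hx, ← rpow_add_one' hx (by rw [sub_add_cancel]; linarith), sub_add_cancel]

noncomputable def crConst (k δ : ℝ) : ℝ := (1 + k * (k - 1) * δ) ^ (1 / k)

section CrConst

variable {k δ : ℝ}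

lemma one_le_one_add_mul_mul (hk : 1 < k) (hδ : 0 ≤ δ) : 1 ≤ 1 + k * (k - 1) * δ := by
  have := mul_nonneg (mul_pos (by linarith : 0 < k) (sub_pos.2 hk)).le hδ
  linarith

lemma crConst_pos (hk : 1 < k) (hδ : 0 ≤ δ) : 0 < crConst k δ :=
  rpow_pos_of_pos (by linarith [one_le_one_add_mul_mul hk hδ]) _

lemma crConst_rpow (hk : 1 < k) (hδ : 0 ≤ δ) : crConst k δ ^ k = 1 + k * (k - 1) * δ := by
  rw [crConst, ← rpow_mul (by linarith [one_le_one_add_mul_mul hk hδ]),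
    one_div_mul_cancel (by linarith), rpow_one]

lemma one_lt_crConst (hk : 1 < k) (hδ : 0 < δ) : 1 < crConst k δ := by
  have := mul_pos (mul_pos (by linarith : 0 < k) (sub_pos.2 hk)) hδ
  exact one_lt_rpow (by linarith) (by simp; linarith)

end CrConst

section Duality

variable {Ω : Type*} [MeasurableSpace Ω] {P : Measure Ω} {L Z : Ω → ℝ} {k δ M : ℝ}

theorem lintegral_fCR_le_ofReal_iff [IsProbabilityMeasure P] (hk : 1 < k) (hδ : 0 ≤ δ)
    (hLm : Measurable L) (hL0 : ∀ ω, 0 ≤ L ω) (hLi : Integrable L P)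
    (hL1 : ∫ ω, L ω ∂P = 1) :
    ∫⁻ ω, ENNReal.ofReal (fCR k (L ω)) ∂P ≤ ENNReal.ofReal δ ↔
      Integrable (fun ω => L ω ^ k) P ∧ ∫ ω, L ω ^ k ∂P ≤ 1 + k * (k - 1) * δ := by
  have hkk : 0 < k * (k - 1) := mul_pos (by linarith) (by linarith)
  have hL : ∀ ω, L ω ^ k = k * (k - 1) * fCR k (L ω) + k * L ω - (k - 1) :=
    fun ω => rpow_eq_fCR (by linarith) hk.ne' (L ω)
  have hfm : Measurable fun ω => fCR k (L ω) := by unfold fCR; fun_prop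
  have hf0 : 0 ≤ᵐ[P] fun ω => fCR k (L ω) := ae_of_all _ fun ω => fCR_nonneg hk (hL0 ω)
  have hint : Integrable (fun ω => fCR k (L ω)) P ↔ Integrable (fun ω => L ω ^ k) P := by
    refine ⟨fun h => ?_, fun h => ?_⟩
    · exact (((h.const_mul _).add (hLi.const_mul k)).sub (integrable_const _)).congr
        (ae_of_all _ fun ω => (hL ω).symm)
    · exact (((h.sub (hLi.const_mul k)).add (integrable_const k)).sub
        (integrable_const 1)).div_const _
  by_cases hLk : Integrable (fun ω => L ω ^ k) P
  · have hf := hint.2 hLk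
    have hval : ∫ ω, L ω ^ k ∂P = k * (k - 1) * ∫ ω, fCR k (L ω) ∂P + 1 := by
      rw [integral_congr_ae (ae_of_all _ hL),
        integral_sub (f := fun ω => k * (k - 1) * fCR k (L ω) + k * L ω)
          ((hf.const_mul _).add (hLi.const_mul k)) (integrable_const _),
        integral_add (hf.const_mul _) (hLi.const_mul k), integral_const_mul, integral_const_mul,
        hL1, integral_const]
      simp only [probReal_univ, smul_eq_mul, one_mul, mul_one]
      ring
    rw [← ofReal_integral_eq_lintegral_ofReal hf hf0, ENNReal.ofReal_le_ofReal_iff hδ, hval]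
    simp only [hLk, true_and]
    constructor <;> intro h <;> nlinarith
  · have htop : ∫⁻ ω, ENNReal.ofReal (fCR k (L ω)) ∂P = ⊤ := by
      by_contra h
      exact hLk <| hint.1 <|
        (lintegral_ofReal_ne_top_iff_integrable hfm.aestronglyMeasurable hf0).1 h
    simp [htop, hLk]

theorem crDiv_withDensity_ofReal [SigmaFinite P] (k : ℝ) (hLm : Measurable L)
    (hL0 : ∀ ω, 0 ≤ L ω) :
    crDiv k (P.withDensity fun ω => ENNReal.ofReal (L ω)) P =
      ∫⁻ ω, ENNReal.ofReal (fCR k (L ω)) ∂P := by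
  refine lintegral_congr_ae ?_
  filter_upwards [Measure.rnDeriv_withDensity P hLm.ennreal_ofReal] with ω hω
  rw [hω, ENNReal.toReal_ofReal (hL0 ω)]

theorem exists_crDiv_le_integral_eq_integral_mul [IsProbabilityMeasure P] (hk : 1 < k)
    (hδ : 0 ≤ δ) (hLm : Measurable L) (hL0 : ∀ ω, 0 ≤ L ω) (hLi : Integrable L P)
    (hL1 : ∫ ω, L ω ∂P = 1) (hLk : Integrable (fun ω => L ω ^ k) P)
    (hLk1 : ∫ ω, L ω ^ k ∂P ≤ 1 + k * (k - 1) * δ) (Z : Ω → ℝ) :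
    ∃ Q : Measure Ω, IsProbabilityMeasure Q ∧ Q ≪ P ∧ crDiv k Q P ≤ ENNReal.ofReal δ ∧
      ∫ ω, Z ω ∂Q = ∫ ω, L ω * Z ω ∂P := by
  refine ⟨P.withDensity fun ω => ENNReal.ofReal (L ω), ⟨?_⟩,
    withDensity_absolutelyContinuous _ _, ?_, ?_⟩
  · rw [withDensity_apply _ MeasurableSet.univ, setLIntegral_univ,
      ← ofReal_integral_eq_lintegral_ofReal hLi (ae_of_all _ hL0), hL1, ENNReal.ofReal_one]
  · rw [crDiv_withDensity_ofReal k hLm hL0]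
    exact (lintegral_fCR_le_ofReal_iff hk hδ hLm hL0 hLi hL1).2 ⟨hLk, hLk1⟩
  · rw [integral_withDensity_eq_integral_toReal_smul hLm.ennreal_ofReal
      (ae_of_all _ fun _ => ENNReal.ofReal_lt_top)]
    simp_rw [ENNReal.toReal_ofReal (hL0 _), smul_eq_mul]

lemma ae_posPart_sub_le_abs (hZ0 : ∀ᵐ ω ∂P, 0 ≤ Z ω) (a : ℝ) :
    ∀ᵐ ω ∂P, max (a - Z ω) 0 ≤ |a| := by
  filter_upwards [hZ0] with ω hω
  exact max_le (by linarith [le_abs_self a]) (abs_nonneg a)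

lemma integrable_posPart_sub_rpow [IsFiniteMeasure P] (hZm : Measurable Z)
    (hZ0 : ∀ᵐ ω ∂P, 0 ≤ Z ω) {q : ℝ} (hq : 0 ≤ q) (a : ℝ) :
    Integrable (fun ω => max (a - Z ω) 0 ^ q) P := by
  refine (integrable_const (|a| ^ q)).mono' (by fun_prop) ?_
  filter_upwards [ae_posPart_sub_le_abs hZ0 a] with ω hω
  rw [norm_of_nonneg (by positivity)]
  exact rpow_le_rpow (le_max_right _ _) hω hq

theorem hasDerivAt_integral_posPart_sub_rpow [IsFiniteMeasure P] (hZm : Measurable Z)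
    (hZ0 : ∀ᵐ ω ∂P, 0 ≤ Z ω) {p : ℝ} (hp : 1 < p) (α : ℝ) :
    HasDerivAt (fun a => ∫ ω, max (a - Z ω) 0 ^ p ∂P)
      (p * ∫ ω, max (α - Z ω) 0 ^ (p - 1) ∂P) α := by
  have hp0 : 0 ≤ p := by linarith
  have hp1 : 0 ≤ p - 1 := by linarith
  have hbound : ∀ᵐ ω ∂P, ∀ a ∈ Metric.ball α 1,
      ‖p * max (a - Z ω) 0 ^ (p - 1)‖ ≤ p * (|α| + 1) ^ (p - 1) := by
    filter_upwards [hZ0] with ω hω a ha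
    have ha' : |a| < |α| + 1 := by
      have := abs_sub_abs_le_abs_sub a α
      rw [Metric.mem_ball, Real.dist_eq] at ha
      linarith
    rw [norm_of_nonneg (by have := rpow_nonneg (le_max_right (a - Z ω) 0) (p - 1); positivity)]
    gcongr
    exact max_le (by linarith [le_abs_self a]) (by positivity)
  have key := hasDerivAt_integral_of_dominated_loc_of_deriv_le (μ := P) (x₀ := α)
    (F := fun a ω => max (a - Z ω) 0 ^ p) (F' := fun a ω => p * max (a - Z ω) 0 ^ (p - 1))
    (Metric.ball_mem_nhds α one_pos) (Eventually.of_forall fun _ => by fun_prop)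
    (integrable_posPart_sub_rpow hZm hZ0 hp0 α) (by fun_prop) hbound
    (integrable_const _) (ae_of_all _ fun ω a _ => by
      simpa only [Function.comp_def, mul_one] using
        (hasDerivAt_posPart_rpow hp (a - Z ω)).comp a ((hasDerivAt_id' a).sub_const (Z ω)))
  rw [← integral_const_mul]
  exact key.2

lemma ae_le_of_integral_posPart_sub_rpow_eq_zero [IsFiniteMeasure P] (hZm : Measurable Z)
    (hZ0 : ∀ᵐ ω ∂P, 0 ≤ Z ω) {q : ℝ} (hq : 0 < q) {α : ℝ}
    (h : ∫ ω, max (α - Z ω) 0 ^ q ∂P = 0) : ∀ᵐ ω ∂P, α ≤ Z ω := by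
  filter_upwards [(integral_eq_zero_iff_of_nonneg (fun ω => rpow_nonneg (le_max_right _ _) q)
    (integrable_posPart_sub_rpow hZm hZ0 hq.le α)).1 h] with ω hω
  by_contra! hlt
  exact (rpow_pos_of_pos (lt_max_of_lt_left (sub_pos.2 hlt)) q).ne' hω

theorem sub_le_integral_mul_of_holderConjugate [IsProbabilityMeasure P] {p q : ℝ}
    (hpq : p.HolderConjugate q) (hLm : Measurable L) (hL0 : ∀ ω, 0 ≤ L ω)
    (hLi : Integrable L P) (hL1 : ∫ ω, L ω ∂P = 1) (hLp : Integrable (fun ω => L ω ^ p) P)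
    (hZm : Measurable Z) (hZ : ∀ᵐ ω ∂P, Z ω ∈ Icc 0 M) (α : ℝ) :
    α - (∫ ω, L ω ^ p ∂P) ^ (1 / p) * (∫ ω, max (α - Z ω) 0 ^ q ∂P) ^ (1 / q) ≤
      ∫ ω, L ω * Z ω ∂P := by
  set G : Ω → ℝ := fun ω => max (α - Z ω) 0
  have hGbd : ∀ᵐ ω ∂P, ‖G ω‖ ≤ |α| := by
    filter_upwards [ae_posPart_sub_le_abs (hZ.mono fun _ h => h.1) α] with ω hω
    rwa [norm_of_nonneg (le_max_right _ _)]
  have hGm : AEStronglyMeasurable G P := by fun_prop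
  have hLmem : MemLp L (ENNReal.ofReal p) P := by
    rw [← integrable_norm_rpow_iff hLm.aestronglyMeasurable (by simp [hpq.pos])
      ENNReal.ofReal_ne_top, ENNReal.toReal_ofReal hpq.nonneg]
    simpa only [norm_of_nonneg (hL0 _)] using hLp
  have hGmem : MemLp G (ENNReal.ofReal q) P :=
    (memLp_top_of_bound hGm |α| hGbd).mono_exponent le_top
  have holder := integral_mul_le_Lp_mul_Lq_of_nonneg (g := G) hpq (ae_of_all _ hL0)
    (ae_of_all _ fun _ => le_max_right _ _) hLmem hGmem
  have hLG : Integrable (fun ω => L ω * G ω) P := hLi.mul_bdd hGm hGbd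
  have hLZ : Integrable (fun ω => L ω * Z ω) P := by
    refine hLi.mul_bdd hZm.aestronglyMeasurable (c := M) ?_
    filter_upwards [hZ] with ω hω
    rw [norm_of_nonneg hω.1]
    exact hω.2
  have hmono : ∫ ω, (α * L ω - L ω * G ω) ∂P ≤ ∫ ω, L ω * Z ω ∂P := by
    refine integral_mono (hLi.const_mul α |>.sub hLG) hLZ fun ω => ?_
    have : α - G ω ≤ Z ω := by linarith [le_max_left (α - Z ω) 0]
    nlinarith [hL0 ω]
  rw [integral_sub (hLi.const_mul α) hLG, integral_const_mul, hL1, mul_one] at hmono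
  linarith

noncomputable def crDual (P : Measure Ω) (Z : Ω → ℝ) (k δ α : ℝ) : ℝ :=
  -crConst k δ * (∫ ω, (max (α - Z ω) 0) ^ (k / (k - 1)) ∂P) ^ ((k - 1) / k) + α

theorem crDual_le_integral [IsProbabilityMeasure P] (hk : 1 < k) (hδ : 0 ≤ δ)
    (hZm : Measurable Z) (hZ : ∀ᵐ ω ∂P, Z ω ∈ Icc 0 M) {Q : Measure Ω} [IsProbabilityMeasure Q]
    (hQP : Q ≪ P) (hdiv : crDiv k Q P ≤ ENNReal.ofReal δ) (α : ℝ) :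
    crDual P Z k δ α ≤ ∫ ω, Z ω ∂Q := by
  set L : Ω → ℝ := fun ω => (Q.rnDeriv P ω).toReal
  have hLm : Measurable L := (Measure.measurable_rnDeriv Q P).ennreal_toReal
  have hL0 : ∀ ω, 0 ≤ L ω := fun _ => ENNReal.toReal_nonneg
  have hLi : Integrable L P := Measure.integrable_toReal_rnDeriv
  have hL1 : ∫ ω, L ω ∂P = 1 := by simp [L, Measure.integral_toReal_rnDeriv hQP]
  obtain ⟨hLk, hLk1⟩ := (lintegral_fCR_le_ofReal_iff hk hδ hLm hL0 hLi hL1).1 hdiv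
  have hholder := sub_le_integral_mul_of_holderConjugate (.conjExponent hk) hLm hL0 hLi hL1
    hLk hZm hZ α
  have hnorm : (∫ ω, L ω ^ k ∂P) ^ (1 / k) ≤ crConst k δ :=
    rpow_le_rpow (integral_nonneg fun ω => rpow_nonneg (hL0 ω) k) hLk1 (by positivity)
  have hG : 0 ≤ (∫ ω, max (α - Z ω) 0 ^ (k / (k - 1)) ∂P) ^ ((k - 1) / k) :=
    rpow_nonneg (integral_nonneg fun ω => rpow_nonneg (le_max_right _ _) _) _
  rw [← integral_rnDeriv_smul hQP]
  simp only [Real.conjExponent, one_div_div] at hholder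
  simp only [crDual, smul_eq_mul]
  nlinarith [mul_le_mul_of_nonneg_right hnorm hG]

lemma crDual_eq_of_integral_eq_zero (hk : 1 < k) {α : ℝ}
    (h : ∫ ω, max (α - Z ω) 0 ^ (k / (k - 1)) ∂P = 0) : crDual P Z k δ α = α := by
  rw [crDual, h, zero_rpow (div_pos (by linarith) (by linarith)).ne']
  ring

lemma crDual_of_nonpos (hZ0 : ∀ᵐ ω ∂P, 0 ≤ Z ω) (hk : 1 < k) {α : ℝ} (hα : α ≤ 0) :
    crDual P Z k δ α = α := by
  refine crDual_eq_of_integral_eq_zero hk (integral_eq_zero_of_ae ?_)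
  filter_upwards [hZ0] with ω hω
  rw [max_eq_right (by linarith), zero_rpow (div_pos (by linarith) (by linarith)).ne']
  rfl

lemma crDual_le_of_le [IsProbabilityMeasure P] (hZm : Measurable Z)
    (hZ : ∀ᵐ ω ∂P, Z ω ∈ Icc 0 M) (hk : 1 < k) (hδ : 0 ≤ δ) {a : ℝ} (ha : M ≤ a) :
    crDual P Z k δ a ≤ a - crConst k δ * (a - M) := by
  have hq : 0 < k / (k - 1) := div_pos (by linarith) (by linarith)
  have hlow : (a - M) ^ (k / (k - 1)) ≤ ∫ ω, max (a - Z ω) 0 ^ (k / (k - 1)) ∂P :=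
    calc (a - M) ^ (k / (k - 1)) = ∫ _, (a - M) ^ (k / (k - 1)) ∂P := by simp
      _ ≤ _ := by
        refine integral_mono_ae (integrable_const _)
          (integrable_posPart_sub_rpow hZm (hZ.mono fun _ h => h.1) hq.le a) ?_
        filter_upwards [hZ] with ω hω
        exact rpow_le_rpow (by linarith) (le_max_of_le_left (by linarith [hω.2])) hq.le
  have hnorm : a - M ≤ (∫ ω, max (a - Z ω) 0 ^ (k / (k - 1)) ∂P) ^ ((k - 1) / k) := by
    have := rpow_le_rpow (rpow_nonneg (sub_nonneg.2 ha) _) hlow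
      (div_pos (sub_pos.2 hk) (by linarith : (0 : ℝ) < k)).le
    rwa [← rpow_mul (by linarith), div_mul_div_cancel₀ (sub_pos.2 hk).ne',
      div_self (by linarith : (0 : ℝ) < k).ne', rpow_one] at this
  rw [crDual]
  nlinarith [mul_le_mul_of_nonneg_left hnorm (crConst_pos hk hδ).le]

lemma continuous_crDual [IsFiniteMeasure P] (hZm : Measurable Z) (hZ0 : ∀ᵐ ω ∂P, 0 ≤ Z ω)
    (hk : 1 < k) (δ : ℝ) : Continuous (crDual P Z k δ) := by
  have hq : 1 < k / (k - 1) := (one_lt_div (sub_pos.2 hk)).2 (by linarith)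
  have hh : Continuous fun a => ∫ ω, max (a - Z ω) 0 ^ (k / (k - 1)) ∂P :=
    continuous_iff_continuousAt.2 fun a =>
      (hasDerivAt_integral_posPart_sub_rpow hZm hZ0 hq a).continuousAt
  exact (continuous_const.mul (hh.rpow_const fun _ =>
    Or.inr (div_pos (sub_pos.2 hk) (by linarith : (0 : ℝ) < k)).le)).add continuous_id

lemma tendsto_crDual_cocompact [IsProbabilityMeasure P] (hZm : Measurable Z)
    (hZ : ∀ᵐ ω ∂P, Z ω ∈ Icc 0 M) (hk : 1 < k) (hδ : 0 < δ) :
    Tendsto (crDual P Z k δ) (cocompact ℝ) atBot := by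
  rw [cocompact_eq_atBot_atTop, tendsto_sup]
  refine ⟨tendsto_id.congr' ?_,
    tendsto_atBot_mono' (f₁ := fun a => a - crConst k δ * (a - M)) _ ?_ ?_⟩
  · filter_upwards [eventually_le_atBot 0] with a ha
    exact (crDual_of_nonpos (hZ.mono fun _ h => h.1) hk ha).symm
  · filter_upwards [eventually_ge_atTop M] with a ha
    exact crDual_le_of_le hZm hZ hk hδ.le ha
  · have hc := one_lt_crConst hk hδ
    refine (tendsto_atBot_add_const_left _ (crConst k δ * M)
      (tendsto_id.const_mul_atTop_of_neg (sub_neg.2 hc))).congr fun a => ?_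
    simp only [id]
    ring

lemma crConst_mul_integral_eq_of_isLocalMax [IsFiniteMeasure P] (hZm : Measurable Z)
    (hZ0 : ∀ᵐ ω ∂P, 0 ≤ Z ω) (hk : 1 < k) {α : ℝ} (hα : IsLocalMax (crDual P Z k δ) α)
    (hpos : 0 < ∫ ω, max (α - Z ω) 0 ^ (k / (k - 1)) ∂P) :
    crConst k δ * ∫ ω, max (α - Z ω) 0 ^ (k / (k - 1) - 1) ∂P =
      (∫ ω, max (α - Z ω) 0 ^ (k / (k - 1)) ∂P) ^ (1 / k) := by
  have hq : 1 < k / (k - 1) := (one_lt_div (sub_pos.2 hk)).2 (by linarith)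
  have hk0 : k ≠ 0 := by linarith
  have hk1 : k - 1 ≠ 0 := (sub_pos.2 hk).ne'
  set h := ∫ ω, max (α - Z ω) 0 ^ (k / (k - 1)) ∂P
  set m := ∫ ω, max (α - Z ω) 0 ^ (k / (k - 1) - 1) ∂P
  have hderiv : HasDerivAt (crDual P Z k δ)
      (-crConst k δ * (k / (k - 1) * m * ((k - 1) / k) * h ^ ((k - 1) / k - 1)) + 1) α :=
    (((hasDerivAt_integral_posPart_sub_rpow hZm hZ0 hq α).rpow_const
      (Or.inl hpos.ne')).const_mul _).add (hasDerivAt_id α)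
  have h0 := hα.hasDerivAt_eq_zero hderiv
  rw [show k / (k - 1) * m * ((k - 1) / k) = m by field_simp,
    show (k - 1) / k - 1 = -(1 / k) by field_simp; ring, rpow_neg hpos.le] at h0
  have := rpow_pos_of_pos hpos (1 / k)
  field_simp at h0
  linarith

theorem exists_integral_eq_crDual_of_crConst_mul_eq [IsProbabilityMeasure P]
    (hZm : Measurable Z) (hZ0 : ∀ᵐ ω ∂P, 0 ≤ Z ω) (hk : 1 < k) (hδ : 0 ≤ δ) {α : ℝ}
    (hpos : 0 < ∫ ω, max (α - Z ω) 0 ^ (k / (k - 1)) ∂P)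
    (hfoc : crConst k δ * ∫ ω, max (α - Z ω) 0 ^ (k / (k - 1) - 1) ∂P =
      (∫ ω, max (α - Z ω) 0 ^ (k / (k - 1)) ∂P) ^ (1 / k)) :
    ∃ Q : Measure Ω, IsProbabilityMeasure Q ∧ Q ≪ P ∧ crDiv k Q P ≤ ENNReal.ofReal δ ∧
      ∫ ω, Z ω ∂Q = crDual P Z k δ α := by
  have hq : 1 < k / (k - 1) := (one_lt_div (sub_pos.2 hk)).2 (by linarith)
  have hk0 : 0 < k := by linarith
  have hk1 : k - 1 ≠ 0 := (sub_pos.2 hk).ne'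
  set h := ∫ ω, max (α - Z ω) 0 ^ (k / (k - 1)) ∂P
  set m := ∫ ω, max (α - Z ω) 0 ^ (k / (k - 1) - 1) ∂P
  have hc := crConst_pos hk hδ
  have hm : 0 < m := pos_of_mul_pos_right (hfoc ▸ rpow_pos_of_pos hpos _) hc.le
  have hmk : m ^ k = h / crConst k δ ^ k := by
    rw [eq_div_iff (rpow_pos_of_pos hc k).ne', ← mul_rpow hm.le hc.le, mul_comm, hfoc,
      ← rpow_mul hpos.le, one_div_mul_cancel hk0.ne', rpow_one]
  set L : Ω → ℝ := fun ω => max (α - Z ω) 0 ^ (k / (k - 1) - 1) / m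
  have hLi : Integrable L P :=
    (integrable_posPart_sub_rpow hZm hZ0 (by linarith) α).div_const m
  have hL1 : ∫ ω, L ω ∂P = 1 := by rw [integral_div, div_self hm.ne']
  have hLk : ∀ ω, L ω ^ k = max (α - Z ω) 0 ^ (k / (k - 1)) / m ^ k := fun ω => by
    rw [div_rpow (rpow_nonneg (le_max_right _ _) _) hm.le, ← rpow_mul (le_max_right _ _)]
    congr 2
    field_simp
    ring
  have hLZ : ∀ ω, L ω * Z ω = α * L ω - max (α - Z ω) 0 ^ (k / (k - 1)) / m := fun ω => by
    rw [← posPart_rpow_sub_one_mul hq]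
    ring
  have hGi := integrable_posPart_sub_rpow hZm hZ0 (by linarith : 0 ≤ k / (k - 1)) α
  obtain ⟨Q, hQ, hQP, hdiv, hZQ⟩ := exists_crDiv_le_integral_eq_integral_mul hk hδ
    (by fun_prop) (fun ω => div_nonneg (rpow_nonneg (le_max_right _ _) _) hm.le) hLi hL1
    ((hGi.div_const _).congr (ae_of_all _ fun ω => (hLk ω).symm))
    (by rw [integral_congr_ae (ae_of_all _ hLk), integral_div, hmk, div_div_cancel₀ hpos.ne',
      crConst_rpow hk hδ]) Z
  refine ⟨Q, hQ, hQP, hdiv, ?_⟩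
  have hval : crConst k δ * h ^ ((k - 1) / k) = h / m := by
    rw [show (k - 1) / k = 1 - 1 / k by field_simp, rpow_sub hpos, rpow_one, ← hfoc]
    field_simp
  rw [hZQ, integral_congr_ae (ae_of_all _ hLZ), integral_sub (hLi.const_mul α)
    (hGi.div_const m), integral_const_mul, hL1, integral_div, crDual, neg_mul, hval]
  ring

theorem exists_integral_eq_of_one_le_mul_measureReal [IsProbabilityMeasure P]
    (hZm : Measurable Z) (hk : 1 < k) (hδ : 0 ≤ δ) {α : ℝ} (hαZ : ∀ᵐ ω ∂P, α ≤ Z ω)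
    (hA : 1 ≤ crConst k δ ^ (k / (k - 1)) * P.real {ω | Z ω ≤ α}) :
    ∃ Q : Measure Ω, IsProbabilityMeasure Q ∧ Q ≪ P ∧ crDiv k Q P ≤ ENNReal.ofReal δ ∧
      ∫ ω, Z ω ∂Q = α := by
  set A := {ω | Z ω ≤ α}
  have hAm : MeasurableSet A := hZm measurableSet_Iic
  set p := P.real A
  have hp : 0 < p := by
    refine measureReal_nonneg.lt_of_ne fun h => ?_
    change 0 = p at h
    rw [← h, mul_zero] at hA
    linarith
  set L : Ω → ℝ := A.indicator fun _ => p⁻¹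
  have hL1 : ∫ ω, L ω ∂P = 1 := by
    rw [integral_indicator_const _ hAm, smul_eq_mul, mul_inv_cancel₀ hp.ne']
  have hLk : (fun ω => L ω ^ k) = A.indicator fun _ => p⁻¹ ^ k := by
    ext ω
    by_cases hω : ω ∈ A <;> simp [L, hω, zero_rpow (by linarith : k ≠ 0)]
  have hLZ : (fun ω => L ω * Z ω) =ᵐ[P] fun ω => L ω * α := by
    filter_upwards [hαZ] with ω hω
    by_cases hmem : ω ∈ A
    · rw [le_antisymm hmem hω]
    · simp [L, hmem]
  have hcp : 1 ≤ crConst k δ ^ k * p ^ (k - 1) := by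
    have hc := crConst_pos hk hδ
    rw [show crConst k δ ^ k = (crConst k δ ^ (k / (k - 1))) ^ (k - 1) by
      rw [← rpow_mul hc.le, div_mul_cancel₀ _ (sub_pos.2 hk).ne'],
      ← mul_rpow (rpow_nonneg hc.le _) hp.le]
    exact one_le_rpow hA (by linarith)
  have hLk1 : ∫ ω, L ω ^ k ∂P ≤ 1 + k * (k - 1) * δ := by
    rw [hLk, integral_indicator_const _ hAm, smul_eq_mul, ← crConst_rpow hk hδ, inv_rpow hp.le,
      ← div_eq_mul_inv, div_le_iff₀ (rpow_pos_of_pos hp k)]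
    calc p = p * 1 := (mul_one p).symm
      _ ≤ p * (crConst k δ ^ k * p ^ (k - 1)) := by gcongr
      _ = crConst k δ ^ k * p ^ k := by rw [rpow_sub_one hp.ne']; field_simp
  obtain ⟨Q, hQ, hQP, hdiv, hZQ⟩ := exists_crDiv_le_integral_eq_integral_mul hk hδ
    (measurable_const.indicator hAm) (fun ω => indicator_nonneg (fun _ _ => inv_nonneg.2 hp.le) ω)
    ((integrable_const _).indicator hAm) hL1 (hLk ▸ (integrable_const _).indicator hAm) hLk1 Z
  exact ⟨Q, hQ, hQP, hdiv, by rw [hZQ, integral_congr_ae hLZ, integral_mul_const, hL1, one_mul]⟩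

lemma integral_posPart_sub_rpow_le [IsFiniteMeasure P] (hZm : Measurable Z)
    (hZ0 : ∀ᵐ ω ∂P, 0 ≤ Z ω) {q : ℝ} (hq : 0 < q) {α y : ℝ} (hαZ : ∀ᵐ ω ∂P, α ≤ Z ω) :
    ∫ ω, max (y - Z ω) 0 ^ q ∂P ≤ P.real {ω | Z ω ≤ y} * max (y - α) 0 ^ q := by
  have hSm : MeasurableSet {ω | Z ω ≤ y} := hZm measurableSet_Iic
  rw [← smul_eq_mul, ← integral_indicator_const _ hSm]
  refine integral_mono_ae (integrable_posPart_sub_rpow hZm hZ0 hq.le y)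
    ((integrable_const _).indicator hSm) ?_
  filter_upwards [hαZ] with ω hω
  by_cases hmem : Z ω ≤ y
  · rw [indicator_of_mem (show ω ∈ {ω | Z ω ≤ y} from hmem)]
    exact rpow_le_rpow (le_max_right _ _) (max_le_max_right 0 (by linarith)) hq.le
  · rw [indicator_of_notMem (show ω ∉ {ω | Z ω ≤ y} from hmem),
      max_eq_right (by linarith), zero_rpow hq.ne']

lemma one_le_crConst_rpow_mul_measureReal_of_crDual_le [IsProbabilityMeasure P]
    (hZm : Measurable Z) (hZ0 : ∀ᵐ ω ∂P, 0 ≤ Z ω) (hk : 1 < k) (hδ : 0 ≤ δ) {α y : ℝ}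
    (h0 : ∫ ω, max (α - Z ω) 0 ^ (k / (k - 1)) ∂P = 0) (hy : α < y)
    (hle : crDual P Z k δ y ≤ crDual P Z k δ α) :
    1 ≤ crConst k δ ^ (k / (k - 1)) * P.real {ω | Z ω ≤ y} := by
  have hq : 0 < k / (k - 1) := div_pos (by linarith) (sub_pos.2 hk)
  have hc := crConst_pos hk hδ
  set H := ∫ ω, max (y - Z ω) 0 ^ (k / (k - 1)) ∂P
  have hH0 : 0 ≤ H := integral_nonneg fun ω => rpow_nonneg (le_max_right _ _) _
  have hH := integral_posPart_sub_rpow_le hZm hZ0 hq (y := y)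
    (ae_le_of_integral_posPart_sub_rpow_eq_zero hZm hZ0 hq h0)
  rw [max_eq_left (sub_pos.2 hy).le] at hH
  rw [crDual_eq_of_integral_eq_zero hk h0, crDual] at hle
  have hgap : y - α ≤ crConst k δ * H ^ ((k - 1) / k) := by linarith
  have hgapq : (y - α) ^ (k / (k - 1)) ≤ crConst k δ ^ (k / (k - 1)) * H := by
    have := rpow_le_rpow (by linarith) hgap hq.le
    rwa [mul_rpow hc.le (rpow_nonneg hH0 _), ← rpow_mul hH0,
      div_mul_div_cancel₀ (by linarith : k ≠ 0), div_self (sub_pos.2 hk).ne', rpow_one] at this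
  have hyα := rpow_pos_of_pos (sub_pos.2 hy) (k / (k - 1))
  nlinarith [rpow_pos_of_pos hc (k / (k - 1))]

lemma one_le_crConst_rpow_mul_measureReal_of_isLocalMax [IsProbabilityMeasure P]
    (hZm : Measurable Z) (hZ0 : ∀ᵐ ω ∂P, 0 ≤ Z ω) (hk : 1 < k) (hδ : 0 ≤ δ) {α : ℝ}
    (hα : IsLocalMax (crDual P Z k δ) α)
    (h0 : ∫ ω, max (α - Z ω) 0 ^ (k / (k - 1)) ∂P = 0) :
    1 ≤ crConst k δ ^ (k / (k - 1)) * P.real {ω | Z ω ≤ α} := by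
  have := Measure.isProbabilityMeasure_map (μ := P) hZm.aemeasurable
  have hcdf : ∀ y, cdf (P.map Z) y = P.real {ω | Z ω ≤ y} := fun y => by
    rw [cdf_eq_real, map_measureReal_apply hZm measurableSet_Iic]
    rfl
  have hlim : Tendsto (fun y => crConst k δ ^ (k / (k - 1)) * cdf (P.map Z) y) (𝓝[>] α)
      (𝓝 (crConst k δ ^ (k / (k - 1)) * cdf (P.map Z) α)) :=
    (((cdf (P.map Z)).right_continuous α).mono Ioi_subset_Ici_self).tendsto.const_mul _
  rw [← hcdf]
  refine ge_of_tendsto hlim ?_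
  filter_upwards [self_mem_nhdsWithin, nhdsWithin_le_nhds hα] with y hy hle
  rw [hcdf]
  exact one_le_crConst_rpow_mul_measureReal_of_crDual_le hZm hZ0 hk hδ h0 hy hle

theorem exists_integral_eq_crDual_of_isLocalMax [IsProbabilityMeasure P] (hZm : Measurable Z)
    (hZ0 : ∀ᵐ ω ∂P, 0 ≤ Z ω) (hk : 1 < k) (hδ : 0 ≤ δ) {α : ℝ}
    (hα : IsLocalMax (crDual P Z k δ) α) :
    ∃ Q : Measure Ω, IsProbabilityMeasure Q ∧ Q ≪ P ∧ crDiv k Q P ≤ ENNReal.ofReal δ ∧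
      ∫ ω, Z ω ∂Q = crDual P Z k δ α := by
  rcases (integral_nonneg (μ := P) (f := fun ω => max (α - Z ω) 0 ^ (k / (k - 1)))
    fun ω => rpow_nonneg (le_max_right _ _) _).eq_or_lt with h0 | hpos
  · rw [crDual_eq_of_integral_eq_zero hk h0.symm]
    exact exists_integral_eq_of_one_le_mul_measureReal hZm hk hδ
      (ae_le_of_integral_posPart_sub_rpow_eq_zero hZm hZ0
        (div_pos (by linarith) (sub_pos.2 hk)) h0.symm)
      (one_le_crConst_rpow_mul_measureReal_of_isLocalMax hZm hZ0 hk hδ hα h0.symm)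
  · exact exists_integral_eq_crDual_of_crConst_mul_eq hZm hZ0 hk hδ hpos
      (crConst_mul_integral_eq_of_isLocalMax hZm hZ0 hk hα hpos)

end Duality

/-- **Strong duality for Cressie–Read DRO evaluation:** for `k ∈ (1, ∞)`,
`k_* = k/(k−1)` and `c_k(δ) = (1 + k(k−1)δ)^{1/k}`,
`inf { E_Q[Z] : Q ≪ P, D_k(Q‖P) ≤ δ } = sup_α { −c_k(δ) E_P[((α−Z)_+)^{k_*}]^{1/k_*} + α }`. -/
theorem stmt13 {Ω : Type*} [MeasurableSpace Ω] (P : Measure Ω) [IsProbabilityMeasure P]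
    (Z : Ω → ℝ) (hZmeas : Measurable Z) (M : ℝ) (hZ : ∀ᵐ ω ∂P, Z ω ∈ Set.Icc 0 M)
    (k δ : ℝ) (hk : 1 < k) (hδ : 0 < δ) :
    sInf {r : ℝ | ∃ Q : Measure Ω, IsProbabilityMeasure Q ∧ Q ≪ P ∧
        crDiv k Q P ≤ ENNReal.ofReal δ ∧ r = ∫ ω, Z ω ∂Q}
      = sSup {r : ℝ | ∃ α : ℝ,
          r = -(1 + k * (k - 1) * δ) ^ (1 / k) *
              (∫ ω, (max (α - Z ω) 0) ^ (k / (k - 1)) ∂P) ^ ((k - 1) / k) + α} := by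
  have hZ0 : ∀ᵐ ω ∂P, 0 ≤ Z ω := hZ.mono fun _ h => h.1
  obtain ⟨α, hα⟩ := (continuous_crDual hZmeas hZ0 hk δ).exists_forall_ge
    (tendsto_crDual_cocompact hZmeas hZ hk hδ)
  obtain ⟨Q, hQ, hQP, hdiv, hQα⟩ :=
    exists_integral_eq_crDual_of_isLocalMax hZmeas hZ0 hk hδ.le (Eventually.of_forall hα)
  have hleast : IsLeast {r : ℝ | ∃ Q : Measure Ω, IsProbabilityMeasure Q ∧ Q ≪ P ∧
      crDiv k Q P ≤ ENNReal.ofReal δ ∧ r = ∫ ω, Z ω ∂Q} (crDual P Z k δ α) := by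
    refine ⟨⟨Q, hQ, hQP, hdiv, hQα.symm⟩, ?_⟩
    rintro _ ⟨Q', hQ', hQ'P, hdiv', rfl⟩
    exact crDual_le_integral hk hδ.le hZmeas hZ hQ'P hdiv' α
  have hgreatest : IsGreatest {r : ℝ | ∃ α : ℝ,
      r = -(1 + k * (k - 1) * δ) ^ (1 / k) *
        (∫ ω, (max (α - Z ω) 0) ^ (k / (k - 1)) ∂P) ^ ((k - 1) / k) + α} (crDual P Z k δ α) :=
    ⟨⟨α, rfl⟩, by rintro _ ⟨a, rfl⟩; exact hα a⟩
  rw [hleast.csInf_eq, hgreatest.csSup_eq]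
end

section
/- Let Y be a random variable supported on [0, M] whose distribution has a density f with f(y) ≥ b > 0 for all y ∈ [0, M]. Then liminf_{α → 0+} ( E[exp(−Y/α)] / α ) ≥ b. Moreover, if additionally f(y) ≤ b̄ < ∞ for all y ∈ [0, M], then E[(Y/α) exp(−Y/α)] ≤ α b̄ for every α > 0, and consequently limsup_{α → 0+} E[(Y/α) exp(−Y/α)] / E[exp(−Y/α)] ≤ b̄/b. -/
/-!
The law `ν` of `Y` is squeezed between `b • λ|[0,M]` and `B • λ|[0,M]`, where `λ` is Lebesgue
measure, so the two expectations are bounded by explicit integrals over `[0, M]`: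
`E[exp(−Y/α)] ≥ b α (1 − exp(−M/α))` and `E[(Y/α) exp(−Y/α)] ≤ B (α − (M + α) exp(−M/α)) ≤ α B`.
Since `ν` is a probability measure absolutely continuous with respect to `λ` and carried by
`[0, M]`, we have `M > 0`, hence `exp(−M/α) → 0` as `α → 0+`, which gives both limit statements.
-/

open MeasureTheory Real Set Filter Topology

section IntervalIntegrals

variable {M α : ℝ}

theorem integral_Icc_exp_neg_div (hα : α ≠ 0) (hM : 0 ≤ M) :
    ∫ y in Icc 0 M, exp (-y / α) = α * (1 - exp (-M / α)) := by
  have hderiv : ∀ x ∈ uIcc 0 M,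
      HasDerivAt (fun x : ℝ => -α * exp (-x / α)) (exp (-x / α)) x := by
    intro x _
    refine ((((hasDerivAt_neg x).div_const α).exp).const_mul (-α)).congr_deriv ?_
    field_simp
  rw [integral_Icc_eq_integral_Ioc, ← intervalIntegral.integral_of_le hM,
    intervalIntegral.integral_eq_sub_of_hasDerivAt hderiv
      (Continuous.intervalIntegrable (by fun_prop) _ _)]
  simp only [neg_zero, zero_div, exp_zero]
  ring

theorem integral_Icc_div_mul_exp_neg_div (hα : α ≠ 0) (hM : 0 ≤ M) :
    ∫ y in Icc 0 M, y / α * exp (-y / α) = α - (M + α) * exp (-M / α) := by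
  have hderiv : ∀ x ∈ uIcc 0 M,
      HasDerivAt (fun x : ℝ => -(x + α) * exp (-x / α)) (x / α * exp (-x / α)) x := by
    intro x _
    refine (((hasDerivAt_id' x).add_const α).neg.mul
      ((hasDerivAt_neg x).div_const α).exp).congr_deriv ?_
    simp only [Pi.neg_apply]
    field_simp
    ring
  rw [integral_Icc_eq_integral_Ioc, ← intervalIntegral.integral_of_le hM,
    intervalIntegral.integral_eq_sub_of_hasDerivAt hderiv
      (Continuous.intervalIntegrable (by fun_prop) _ _)]
  simp only [neg_zero, zero_div, exp_zero, zero_add]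
  ring

end IntervalIntegrals

section DensityComparison

variable {X : Type*} [MeasurableSpace X] {μ : Measure X} {s : Set X} {g : X → ENNReal}
  {c : ENNReal}

theorem smul_restrict_le_withDensity (hs : MeasurableSet s) (hg : ∀ x ∈ s, c ≤ g x) :
    c • μ.restrict s ≤ μ.withDensity g := by
  rw [← withDensity_const, ← withDensity_indicator hs]
  refine withDensity_mono (Eventually.of_forall fun x => ?_)
  by_cases hx : x ∈ s
  · simpa [indicator_of_mem hx] using hg x hx
  · simp [indicator_of_notMem hx]

theorem withDensity_eq_withDensity_restrict (hs : MeasurableSet s)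
    (hg : ∀ x ∉ s, g x = 0) : μ.withDensity g = (μ.restrict s).withDensity g := by
  rw [← withDensity_indicator hs]
  congr 1
  funext x
  by_cases hx : x ∈ s
  · rw [indicator_of_mem hx]
  · rw [indicator_of_notMem hx, hg x hx]

theorem withDensity_le_smul_restrict (hs : MeasurableSet s) (hg : ∀ x ∈ s, g x ≤ c)
    (hg₀ : ∀ x ∉ s, g x = 0) : μ.withDensity g ≤ c • μ.restrict s := by
  rw [withDensity_eq_withDensity_restrict hs hg₀, ← withDensity_const]
  exact withDensity_mono ((ae_restrict_iff' hs).2 (Eventually.of_forall hg))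

theorem ae_withDensity_mem (hs : MeasurableSet s) (hg : ∀ x ∉ s, g x = 0) :
    ∀ᵐ x ∂μ.withDensity g, x ∈ s := by
  rw [withDensity_eq_withDensity_restrict hs hg]
  exact withDensity_absolutelyContinuous _ _ (ae_restrict_mem hs)

end DensityComparison

theorem lt_of_ae_mem_Icc {ν : Measure ℝ} [NeZero ν] (hν : ν ≪ volume) {a b : ℝ}
    (h : ∀ᵐ y ∂ν, y ∈ Icc a b) : a < b := by
  by_contra! hba
  have hnull : volume (Icc a b) = 0 := by simp [Real.volume_Icc, hba]
  have hnot : ∀ᵐ y ∂ν, y ∉ Icc a b := hν (measure_eq_zero_iff_ae_notMem.1 hnull)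
  obtain ⟨y, hy, hy'⟩ := (h.and hnot).exists
  exact hy' hy

section Laplace

variable {ν : Measure ℝ} {M α b B : ℝ}

theorem mul_mul_one_sub_exp_le_integral_exp_neg_div [IsFiniteMeasure ν]
    (hν : ∀ᵐ y ∂ν, 0 ≤ y) (hb : 0 ≤ b) (hM : 0 ≤ M) (hα : 0 < α)
    (hle : ENNReal.ofReal b • volume.restrict (Icc 0 M) ≤ ν) :
    b * (α * (1 - exp (-M / α))) ≤ ∫ y, exp (-y / α) ∂ν := by
  have hint : Integrable (fun y => exp (-y / α)) ν := by
    refine Integrable.mono' (integrable_const 1) (by fun_prop) ?_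
    filter_upwards [hν] with y hy
    rw [norm_of_nonneg (exp_pos _).le, exp_le_one_iff, neg_div, neg_nonpos]
    positivity
  have hmono := integral_mono_measure hle (Eventually.of_forall fun y => (exp_pos _).le) hint
  rwa [integral_smul_measure, ENNReal.toReal_ofReal hb, smul_eq_mul,
    integral_Icc_exp_neg_div hα.ne' hM] at hmono

theorem integral_div_mul_exp_neg_div_le (hB : 0 ≤ B) (hM : 0 ≤ M) (hα : 0 < α)
    (hle : ν ≤ ENNReal.ofReal B • volume.restrict (Icc 0 M)) :
    ∫ y, y / α * exp (-y / α) ∂ν ≤ α * B := by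
  have hnonneg : 0 ≤ᵐ[ENNReal.ofReal B • volume.restrict (Icc 0 M)]
      fun y => y / α * exp (-y / α) := by
    refine Measure.ae_smul_measure ?_ _
    filter_upwards [ae_restrict_mem measurableSet_Icc] with y hy
    exact mul_nonneg (div_nonneg hy.1 hα.le) (exp_pos _).le
  have hint : Integrable (fun y => y / α * exp (-y / α))
      (ENNReal.ofReal B • volume.restrict (Icc 0 M)) := by
    have hint₀ : IntegrableOn (fun y => y / α * exp (-y / α)) (Icc 0 M) :=
      Continuous.integrableOn_Icc (by fun_prop)
    exact hint₀.smul_measure ENNReal.ofReal_ne_top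
  have hmono := integral_mono_measure hle hnonneg hint
  rw [integral_smul_measure, ENNReal.toReal_ofReal hB, smul_eq_mul,
    integral_Icc_div_mul_exp_neg_div hα.ne' hM] at hmono
  have hcorr : 0 ≤ B * ((M + α) * exp (-M / α)) :=
    mul_nonneg hB (mul_nonneg (by linarith) (exp_pos _).le)
  linarith

end Laplace

section SmallTemperature

variable {M b : ℝ} {F : ℝ → ℝ}

theorem tendsto_mul_one_sub_exp_neg_div (b : ℝ) (hM : 0 < M) :
    Tendsto (fun α => b * (1 - exp (-M / α))) (𝓝[>] 0) (𝓝 b) := by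
  have hdiv : Tendsto (fun α => M / α) (𝓝[>] 0) atTop := by
    simpa only [div_eq_mul_inv] using tendsto_inv_nhdsGT_zero.const_mul_atTop hM
  have hexp : Tendsto (fun α => exp (-M / α)) (𝓝[>] 0) (𝓝 0) := by
    simpa only [neg_div, Function.comp_def] using
      tendsto_exp_atBot.comp (tendsto_neg_atTop_atBot.comp hdiv)
  simpa using (hexp.const_sub 1).const_mul b

theorem eventually_le_div_self_of_forall_mul_one_sub_exp_le (hM : 0 < M)
    (hF : ∀ α > 0, α * (b * (1 - exp (-M / α))) ≤ F α) {c : ℝ} (hc : c < b) :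
    ∀ᶠ α in 𝓝[>] 0, c ≤ F α / α := by
  filter_upwards [(tendsto_mul_one_sub_exp_neg_div b hM).eventually (eventually_gt_nhds hc),
    self_mem_nhdsWithin] with α hcα (hα : 0 < α)
  rw [le_div_iff₀ hα]
  nlinarith [hF α hα]

theorem eventually_div_le_of_forall_mul_one_sub_exp_le (hM : 0 < M) (hb : 0 < b)
    (hF : ∀ α > 0, α * (b * (1 - exp (-M / α))) ≤ F α) {G : ℝ → ℝ} {B : ℝ} (hB : 0 ≤ B)
    (hG : ∀ α > 0, G α ≤ α * B) {c : ℝ} (hc : B / b < c) :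
    ∀ᶠ α in 𝓝[>] 0, G α / F α ≤ c := by
  have hlim := tendsto_mul_one_sub_exp_neg_div b hM
  filter_upwards [(tendsto_const_nhds.div hlim hb.ne').eventually (eventually_lt_nhds hc),
    hlim.eventually (eventually_gt_nhds hb), self_mem_nhdsWithin] with α hcα hpos (hα : 0 < α)
  calc G α / F α ≤ α * B / (α * (b * (1 - exp (-M / α)))) :=
        div_le_div₀ (mul_nonneg hα.le hB) (hG α hα) (mul_pos hα hpos) (hF α hα)
    _ = B / (b * (1 - exp (-M / α))) := mul_div_mul_left _ _ hα.ne'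
    _ ≤ c := hcα.le

end SmallTemperature

theorem stmt18_general {Ω : Type*} [MeasurableSpace Ω] (μ : Measure Ω) [IsProbabilityMeasure μ]
    (Y : Ω → ℝ) (hY : Measurable Y) (M b : ℝ) (hb : 0 < b)
    (f : ℝ → ℝ)
    (hf0 : ∀ y : ℝ, y ∉ Set.Icc 0 M → f y = 0)
    (hfb : ∀ y ∈ Set.Icc (0 : ℝ) M, b ≤ f y)
    (hlaw : Measure.map Y μ = MeasureTheory.volume.withDensity
      (fun y => ENNReal.ofReal (f y))) :
    (∀ c : ℝ, c < b → ∀ᶠ α in nhdsWithin (0 : ℝ) (Set.Ioi 0),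
        c ≤ (∫ ω, Real.exp (-Y ω / α) ∂μ) / α) ∧
    (∀ B : ℝ, (∀ y ∈ Set.Icc (0 : ℝ) M, f y ≤ B) →
      (∀ α : ℝ, 0 < α → ∫ ω, (Y ω / α) * Real.exp (-Y ω / α) ∂μ ≤ α * B) ∧
      (∀ c : ℝ, B / b < c → ∀ᶠ α in nhdsWithin (0 : ℝ) (Set.Ioi 0),
          (∫ ω, (Y ω / α) * Real.exp (-Y ω / α) ∂μ) / (∫ ω, Real.exp (-Y ω / α) ∂μ) ≤ c)) := by
  have := Measure.isProbabilityMeasure_map (μ := μ) hY.aemeasurable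
  have hdensity0 : ∀ y ∉ Icc 0 M, ENNReal.ofReal (f y) = 0 := fun y hy => by simp [hf0 y hy]
  have hsupp : ∀ᵐ y ∂μ.map Y, y ∈ Icc 0 M :=
    hlaw ▸ ae_withDensity_mem measurableSet_Icc hdensity0
  have hM : 0 < M := lt_of_ae_mem_Icc (hlaw ▸ withDensity_absolutelyContinuous _ _) hsupp
  have hintegral_map : ∀ g : ℝ → ℝ, Continuous g → ∫ ω, g (Y ω) ∂μ = ∫ y, g y ∂μ.map Y :=
    fun g hg => (integral_map hY.aemeasurable hg.aestronglyMeasurable).symm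
  have hlower : ∀ α > 0, α * (b * (1 - exp (-M / α))) ≤ ∫ ω, exp (-Y ω / α) ∂μ := by
    intro α hα
    rw [hintegral_map (fun y => exp (-y / α)) (by fun_prop), mul_left_comm]
    refine mul_mul_one_sub_exp_le_integral_exp_neg_div (hsupp.mono fun y hy => hy.1) hb.le
      hM.le hα (hlaw ▸ smul_restrict_le_withDensity measurableSet_Icc fun y hy => ?_)
    exact ENNReal.ofReal_le_ofReal (hfb y hy)
  refine ⟨fun c hc => eventually_le_div_self_of_forall_mul_one_sub_exp_le hM hlower hc,
    fun B hfB => ?_⟩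
  have hB : 0 ≤ B := hb.le.trans ((hfb 0 ⟨le_rfl, hM.le⟩).trans (hfB 0 ⟨le_rfl, hM.le⟩))
  have hupper : ∀ α > 0, ∫ ω, Y ω / α * exp (-Y ω / α) ∂μ ≤ α * B := by
    intro α hα
    rw [hintegral_map (fun y => y / α * exp (-y / α)) (by fun_prop)]
    refine integral_div_mul_exp_neg_div_le hB hM.le hα
      (hlaw ▸ withDensity_le_smul_restrict measurableSet_Icc (fun y hy => ?_) hdensity0)
    exact ENNReal.ofReal_le_ofReal (hfB y hy)
  exact ⟨hupper, fun c hc =>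
    eventually_div_le_of_forall_mul_one_sub_exp_le hM hb hlower hB hupper hc⟩

/-- **Small-`α` estimates for the KL dual objective.** If `Y` has a density `f` supported on
`[0, M]` with `b ≤ f` on `[0, M]`, then `liminf_{α→0+} E[exp(−Y/α)]/α ≥ b` (stated in the
robust form: every `c < b` is an eventual lower bound); if moreover `f ≤ B` on `[0, M]`, then
`E[(Y/α)exp(−Y/α)] ≤ αB` for all `α > 0` and
`limsup_{α→0+} E[(Y/α)exp(−Y/α)] / E[exp(−Y/α)] ≤ B/b` (every `c > B/b` is an eventual
upper bound). -/
theorem stmt18 {Ω : Type*} [MeasurableSpace Ω] (μ : Measure Ω) [IsProbabilityMeasure μ]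
    (Y : Ω → ℝ) (hY : Measurable Y) (M b : ℝ) (hb : 0 < b)
    (f : ℝ → ℝ) (hfmeas : Measurable f)
    (hf0 : ∀ y : ℝ, y ∉ Set.Icc 0 M → f y = 0)
    (hfb : ∀ y ∈ Set.Icc (0 : ℝ) M, b ≤ f y)
    (hlaw : Measure.map Y μ = MeasureTheory.volume.withDensity
      (fun y => ENNReal.ofReal (f y))) :
    (∀ c : ℝ, c < b → ∀ᶠ α in nhdsWithin (0 : ℝ) (Set.Ioi 0),
        c ≤ (∫ ω, Real.exp (-Y ω / α) ∂μ) / α) ∧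
    (∀ B : ℝ, (∀ y ∈ Set.Icc (0 : ℝ) M, f y ≤ B) →
      (∀ α : ℝ, 0 < α → ∫ ω, (Y ω / α) * Real.exp (-Y ω / α) ∂μ ≤ α * B) ∧
      (∀ c : ℝ, B / b < c → ∀ᶠ α in nhdsWithin (0 : ℝ) (Set.Ioi 0),
          (∫ ω, (Y ω / α) * Real.exp (-Y ω / α) ∂μ) / (∫ ω, Real.exp (-Y ω / α) ∂μ) ≤ c)) :=
  stmt18_general μ Y hY M b hb f hf0 hfb hlaw
end

section
/- Let Y be a random variable with 0 ≤ Y ≤ M almost surely. Then lim_{α → 0+} ( −α log E[exp(−Y/α)] ) = essinf Y, where essinf Y denotes the essential infimum of Y. -/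
open MeasureTheory Real Set Filter
open scoped Topology

/-!
The lower bound is immediate: `Y ≥ essInf Y` a.e. gives `E[exp (-Y/α)] ≤ exp (-essInf Y / α)`.
For the upper bound, fix `c > essInf Y`; the event `{Y < c}` has positive probability `p`, and
restricting the expectation to it gives `E[exp (-Y/α)] ≥ p exp (-c/α)`, that is
`-α log E[exp (-Y/α)] ≤ c - α log p`, which tends to `c` as `α → 0+`.
-/

theorem measure_lt_ne_zero_of_essInf_lt {X β : Type*} [MeasurableSpace X] {μ : Measure X}
    [ConditionallyCompleteLinearOrder β] {f : X → β} {b : β}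
    (hf : IsCoboundedUnder (· ≥ ·) (ae μ) f) (hb : essInf f μ < b) :
    μ {x | f x < b} ≠ 0 := by
  intro h
  have hae : ∀ᵐ x ∂μ, b ≤ f x := by
    rw [ae_iff]
    simpa only [not_le] using h
  exact hb.not_ge (le_liminf_of_le hf hae)

noncomputable def softMin {Ω : Type*} [MeasurableSpace Ω] (μ : Measure Ω) (Y : Ω → ℝ) (α : ℝ) :
    ℝ :=
  -α * log (∫ ω, exp (-Y ω / α) ∂μ)

section SoftMin

variable {Ω : Type*} [MeasurableSpace Ω] {μ : Measure Ω} {Y : Ω → ℝ} {α c : ℝ}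

theorem integrable_exp_neg_div_s19 [IsFiniteMeasure μ] (hY : AEMeasurable Y μ)
    (hc : ∀ᵐ ω ∂μ, c ≤ Y ω) (hα : 0 ≤ α) :
    Integrable (fun ω => exp (-Y ω / α)) μ := by
  refine Integrable.of_bound (hY.neg.div_const α).exp.aestronglyMeasurable (exp (-c / α)) ?_
  filter_upwards [hc] with ω hω
  rw [norm_of_nonneg (exp_pos _).le, exp_le_exp]
  exact div_le_div_of_nonneg_right (neg_le_neg hω) hα

theorem le_softMin [IsProbabilityMeasure μ] (hint : Integrable (fun ω => exp (-Y ω / α)) μ)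
    (hc : ∀ᵐ ω ∂μ, c ≤ Y ω) (hα : 0 < α) :
    c ≤ softMin μ Y α := by
  have hle : ∫ ω, exp (-Y ω / α) ∂μ ≤ exp (-c / α) := by
    calc ∫ ω, exp (-Y ω / α) ∂μ ≤ ∫ _, exp (-c / α) ∂μ := by
          refine integral_mono_ae hint (integrable_const _) ?_
          filter_upwards [hc] with ω hω
          exact exp_le_exp.2 (div_le_div_of_nonneg_right (neg_le_neg hω) hα.le)
      _ = exp (-c / α) := by simp
  have hlog : log (∫ ω, exp (-Y ω / α) ∂μ) ≤ -c / α := by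
    simpa using log_le_log (integral_exp_pos hint) hle
  rw [softMin, neg_mul, le_neg, ← le_div_iff₀' hα]
  exact hlog

theorem softMin_le_of_le_on [IsFiniteMeasure μ] {s : Set Ω} (hs : MeasurableSet s)
    (hμs : μ s ≠ 0) (hint : Integrable (fun ω => exp (-Y ω / α)) μ) (hYs : ∀ ω ∈ s, Y ω ≤ c)
    (hα : 0 < α) :
    softMin μ Y α ≤ c - α * log (μ.real s) := by
  have hps : 0 < μ.real s := ENNReal.toReal_pos hμs (measure_ne_top μ s)
  have hge : exp (-c / α) * μ.real s ≤ ∫ ω, exp (-Y ω / α) ∂μ := by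
    calc exp (-c / α) * μ.real s ≤ ∫ ω in s, exp (-Y ω / α) ∂μ := by
          refine setIntegral_ge_of_const_le_real hs (measure_ne_top μ s) (fun ω hω => ?_)
            hint.integrableOn
          exact exp_le_exp.2 (div_le_div_of_nonneg_right (neg_le_neg (hYs ω hω)) hα.le)
      _ ≤ ∫ ω, exp (-Y ω / α) ∂μ :=
          setIntegral_le_integral hint (Eventually.of_forall fun ω => (exp_pos _).le)
  have hlog : -c / α + log (μ.real s) ≤ log (∫ ω, exp (-Y ω / α) ∂μ) := by
    have := log_le_log (by positivity) hge
    rwa [log_mul (exp_ne_zero _) hps.ne', log_exp] at this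
  have := mul_le_mul_of_nonneg_left hlog hα.le
  rw [mul_add, mul_div_cancel₀ _ hα.ne'] at this
  rw [softMin]
  linarith

end SoftMin

/-- **Right-continuity of the KL dual objective at `α = 0`:**
for a bounded nonnegative random variable `Y`,
`−α log E[exp(−Y/α)] → essinf Y` as `α → 0+`. -/
theorem stmt19 {Ω : Type*} [MeasurableSpace Ω] (μ : Measure Ω) [IsProbabilityMeasure μ]
    (Y : Ω → ℝ) (hY : Measurable Y) (M : ℝ) (hbd : ∀ᵐ ω ∂μ, Y ω ∈ Set.Icc 0 M) :
    Filter.Tendsto (fun α : ℝ => -α * Real.log (∫ ω, Real.exp (-Y ω / α) ∂μ))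
      (nhdsWithin 0 (Set.Ioi 0)) (nhds (essInf Y μ)) := by
  have hY0 : ∀ᵐ ω ∂μ, 0 ≤ Y ω := hbd.mono fun _ h => h.1
  have hcobdd : IsCoboundedUnder (· ≥ ·) (ae μ) Y :=
    IsBoundedUnder.isCoboundedUnder_ge ⟨M, hbd.mono fun _ h => h.2⟩
  have hint (α : ℝ) (hα : 0 < α) : Integrable (fun ω => exp (-Y ω / α)) μ :=
    integrable_exp_neg_div_s19 hY.aemeasurable hY0 hα.le
  refine tendsto_order.2 ⟨fun a ha => ?_, fun b hb => ?_⟩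
  · filter_upwards [self_mem_nhdsWithin] with α hα
    exact ha.trans_le (le_softMin (hint α hα) (ae_essInf_le ⟨0, hY0⟩) hα)
  · obtain ⟨c, hmc, hcb⟩ := exists_between hb
    have hs : μ {ω | Y ω < c} ≠ 0 := measure_lt_ne_zero_of_essInf_lt hcobdd hmc
    have hlim : Tendsto (fun α => c - α * log (μ.real {ω | Y ω < c})) (𝓝[>] 0) (𝓝 c) :=
      tendsto_nhdsWithin_of_tendsto_nhds ((by fun_prop : Continuous _).tendsto' 0 c (by simp))
    filter_upwards [self_mem_nhdsWithin, hlim.eventually (gt_mem_nhds hcb)] with α hα hαb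
    exact (softMin_le_of_le_on (hY measurableSet_Iio) hs (hint α hα) (fun _ h => h.le) hα).trans_lt
      hαb
end
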